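/- arXiv:2107.07511 — 7 statements merged into one kernel-verified Lean document; each statement's English description precedes it below -/
import Mathlib

section
/- Let n ≥ 1, let α ∈ (0,1) satisfy α ≥ 1/(n+1), and let s_1, …, s_{n+1} be i.i.d. real-valued random variables. Define q̂ to be the k-th smallest value among s_1, …, s_n, where k = ⌈(n+1)(1−α)⌉ (note k ≤ n by the assumption on α). Then P(s_{n+1} ≤ q̂) ≥ 1 − α. -/
open MeasureTheory ProbabilityTheory Finset
open scoped ENNReal NNReal


/-- counting: at least k indices j have strict-below count < k -/
lemma aux_count {m k : ℕ} (hk1 : 1 ≤ k) (hkm : k ≤ m) (x : Fin m → ℝ) :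
    k ≤ (univ.filter (fun j : Fin m =>
      (univ.filter (fun i => x i < x j)).card < k)).card := by
  have hm : 0 < m := lt_of_lt_of_le hk1 hkm
  set σ := Tuple.sort x with hσ
  have hmono : Monotone (x ∘ σ) := Tuple.monotone_sort x
  set p : Fin m := ⟨k - 1, by omega⟩ with hp
  set t : ℝ := x (σ p) with ht
  -- count of strictly below t is ≤ k-1
  have hlow : (univ.filter (fun i => x i < t)).card ≤ k - 1 := by
    calc (univ.filter (fun i => x i < t)).card
        ≤ (Finset.Iio p).card := by
          apply Finset.card_le_card_of_injOn (fun i => σ.symm i)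
          · intro i hi
            simp only [mem_coe, mem_filter, mem_univ, true_and] at hi
            simp only [mem_coe, Finset.mem_Iio]
            by_contra hcon
            push_neg at hcon
            have : x (σ p) ≤ x (σ (σ.symm i)) := hmono hcon
            simp only [Equiv.apply_symm_apply] at this
            exact absurd hi (not_lt.2 this)
          · intro a _ b _ hab
            exact σ.symm.injective hab
      _ = k - 1 := by rw [Fin.card_Iio]
  have hbelow : ∀ j, x j ≤ t →
      (univ.filter (fun i => x i < x j)).card < k := by
    intro j hj
    have hsub : (univ.filter (fun i => x i < x j)) ⊆ (univ.filter (fun i => x i < t)) := by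
      intro i hi
      simp only [mem_filter, mem_univ, true_and] at hi ⊢
      exact lt_of_lt_of_le hi hj
    have := Finset.card_le_card hsub
    omega
  -- at least k indices have x j ≤ t
  have hhi : k ≤ (univ.filter (fun j => x j ≤ t)).card := by
    calc k = (Finset.Iic p).card := by rw [Fin.card_Iic, hp]; simp; omega
      _ ≤ (univ.filter (fun j => x j ≤ t)).card := by
          apply Finset.card_le_card_of_injOn (fun a => σ a)
          · intro a ha
            simp only [mem_coe, Finset.mem_Iic] at ha
            simp only [mem_coe, mem_filter, mem_univ, true_and]
            exact hmono ha
          · intro a _ b _ hab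
            exact σ.injective hab
  refine le_trans hhi (Finset.card_le_card ?_)
  intro j hj
  simp only [mem_filter, mem_univ, true_and] at hj ⊢
  exact hbelow j hj

/-- characterization of r ≤ sInf quantile set -/
lemma aux_sInf {m k : ℕ} (hk1 : 1 ≤ k) (hkm : k ≤ m) (x : Fin m → ℝ) (r : ℝ) :
    r ≤ sInf {q : ℝ | k ≤ (univ.filter (fun i : Fin m => x i ≤ q)).card} ↔
      (univ.filter (fun i : Fin m => x i < r)).card < k := by
  have hm : 0 < m := lt_of_lt_of_le hk1 hkm
  have hne : (univ : Finset (Fin m)).Nonempty := ⟨⟨0, hm⟩, mem_univ _⟩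
  set S := {q : ℝ | k ≤ (univ.filter (fun i : Fin m => x i ≤ q)).card} with hS
  have hSne : (univ.sup' hne x) ∈ S := by
    simp only [hS, Set.mem_setOf_eq]
    have : univ.filter (fun i : Fin m => x i ≤ univ.sup' hne x) = univ := by
      apply Finset.filter_true_of_mem
      intro i _
      exact Finset.le_sup' x (mem_univ i)
    rw [this, Finset.card_univ, Fintype.card_fin]
    exact hkm
  have hbdd : BddBelow S := by
    refine ⟨univ.inf' hne x, ?_⟩
    intro q hq
    simp only [hS, Set.mem_setOf_eq] at hq
    have hfne : (univ.filter (fun i : Fin m => x i ≤ q)).Nonempty := by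
      rw [← Finset.card_pos]; omega
    obtain ⟨i, hi⟩ := hfne
    simp only [mem_filter, mem_univ, true_and] at hi
    exact le_trans (Finset.inf'_le x (mem_univ i)) hi
  constructor
  · intro h
    by_contra hcon
    push_neg at hcon
    have hfne : (univ.filter (fun i : Fin m => x i < r)).Nonempty := by
      rw [← Finset.card_pos]; omega
    set q0 := (univ.filter (fun i : Fin m => x i < r)).sup' hfne x with hq0
    have hq0r : q0 < r := by
      rw [hq0, Finset.sup'_lt_iff]
      intro i hi
      simp only [mem_filter, mem_univ, true_and] at hi
      exact hi
    have hq0S : q0 ∈ S := by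
      simp only [hS, Set.mem_setOf_eq]
      refine le_trans hcon (Finset.card_le_card ?_)
      intro i hi
      simp only [mem_filter, mem_univ, true_and] at hi ⊢
      exact Finset.le_sup' x (by simp only [mem_filter, mem_univ, true_and]; exact hi)
    have := csInf_le hbdd hq0S
    linarith
  · intro h
    apply le_csInf ⟨_, hSne⟩
    intro q hq
    simp only [hS, Set.mem_setOf_eq] at hq
    by_contra hcon
    push_neg at hcon
    have hsub : (univ.filter (fun i : Fin m => x i ≤ q)) ⊆
        (univ.filter (fun i : Fin m => x i < r)) := by
      intro i hi
      simp only [mem_filter, mem_univ, true_and] at hi ⊢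
      exact lt_of_le_of_lt hi hcon
    have := Finset.card_le_card hsub
    omega

/-- reindexing a filter by a permutation preserves card -/
lemma aux_card_perm {m : ℕ} (σ : Equiv.Perm (Fin m)) (p : Fin m → Prop) [DecidablePred p] :
    (univ.filter (fun i => p (σ i))).card = (univ.filter p).card := by
  apply Finset.card_bij (fun a _ => σ a)
  · intro a ha
    simp only [mem_filter, mem_univ, true_and] at ha ⊢
    exact ha
  · intro a _ b _ hab
    exact σ.injective hab
  · intro b hb
    refine ⟨σ.symm b, ?_, by simp⟩
    simp only [mem_filter, mem_univ, true_and] at hb ⊢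
    simpa using hb

/-- pi measure of identical probability measures is permutation invariant -/
lemma aux_pi_perm {m : ℕ} (μ : Measure ℝ) [IsProbabilityMeasure μ] (σ : Equiv.Perm (Fin m)) :
    (Measure.pi fun _ : Fin m => μ).map (fun x i => x (σ i)) = Measure.pi fun _ : Fin m => μ := by
  have hg : Measurable (fun (x : Fin m → ℝ) i => x (σ i)) :=
    measurable_pi_lambda _ (fun i => measurable_pi_apply (σ i))
  refine (Measure.pi_eq fun A hA => ?_).symm
  rw [Measure.map_apply hg (MeasurableSet.univ_pi hA)]
  have hpre : (fun (x : Fin m → ℝ) i => x (σ i)) ⁻¹' (Set.pi Set.univ A) =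
      Set.pi Set.univ (fun j => A (σ.symm j)) := by
    ext x
    simp only [Set.mem_preimage, Set.mem_pi, Set.mem_univ, true_implies]
    constructor
    · intro h j
      have := h (σ.symm j)
      simpa using this
    · intro h i
      have := h (σ i)
      simpa using this
  rw [hpre, Measure.pi_pi]
  exact Equiv.prod_comp σ.symm (fun i => μ (A i))

/-- joint law of iid random variables is the pi measure -/
lemma aux_joint_law {Ω : Type*} [MeasurableSpace Ω] (P : Measure Ω) [IsProbabilityMeasure P]
    {m : ℕ} (s : Fin m → Ω → ℝ) (hmeas : ∀ i, Measurable (s i))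
    (hindep : iIndepFun s P) :
    P.map (fun ω i => s i ω) = Measure.pi (fun i => P.map (s i)) := by
  have hS : Measurable (fun ω i => s i ω) := measurable_pi_lambda _ hmeas
  refine (Measure.pi_eq fun A hA => ?_).symm
  rw [Measure.map_apply hS (MeasurableSet.univ_pi hA)]
  have hpre : (fun ω i => s i ω) ⁻¹' (Set.pi Set.univ A) = ⋂ i, s i ⁻¹' A i := by
    ext ω
    simp [Set.mem_pi]
  rw [hpre]
  have := (iIndepFun_iff_measure_inter_preimage_eq_mul.1 hindep) univ
    (sets := fun i => A i) (fun i _ => hA i)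
  rw [show (⋂ i, s i ⁻¹' A i) = ⋂ i ∈ (univ : Finset (Fin m)), s i ⁻¹' A i by simp]
  rw [this]
  exact Finset.prod_congr rfl fun i _ =>
    (Measure.map_apply (hmeas i) (hA i)).symm


lemma aux_cast_card {n : ℕ} (y : Fin (n + 1) → ℝ) :
    (univ.filter (fun i : Fin (n + 1) => y i < y (Fin.last n))).card =
      (univ.filter (fun i : Fin n => y i.castSucc < y (Fin.last n))).card := by
  rw [Finset.card_filter, Finset.card_filter, Fin.sum_univ_castSucc]
  simp [lt_irrefl]

/-- If `n ≥ 1`, `α ∈ (0,1)` with `α ≥ 1/(n+1)`, and `s 0, …, s n` (i.e. `s_1, …, s_{n+1}`)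
are i.i.d. real random variables, and `q̂` is the `k`-th smallest among the first `n` of them
with `k = ⌈(n+1)(1-α)⌉` (equivalently `q̂ ω = inf {q : #{i ≤ n : s_i ω ≤ q} ≥ k}`),
then `P(s_{n+1} ≤ q̂) ≥ 1 - α`. -/
theorem conformal_quantile_coverage
    {Ω : Type*} [MeasurableSpace Ω] (P : Measure Ω) [IsProbabilityMeasure P]
    (n : ℕ) (hn : 1 ≤ n)
    (α : ℝ) (hα0 : 0 < α) (hα1 : α < 1) (hαn : 1 / ((n : ℝ) + 1) ≤ α)
    (s : Fin (n + 1) → Ω → ℝ)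
    (hmeas : ∀ i, Measurable (s i))
    (hindep : iIndepFun s P)
    (hident : ∀ i j, IdentDistrib (s i) (s j) P P)
    (k : ℕ) (hk : k = ⌈((n : ℝ) + 1) * (1 - α)⌉₊)
    (qhat : Ω → ℝ)
    (hqhat : ∀ ω, qhat ω =
      sInf {q : ℝ | k ≤ (Finset.univ.filter
        (fun i : Fin n => s i.castSucc ω ≤ q)).card}) :
    (1 : ℝ) - α ≤ (P {ω | s (Fin.last n) ω ≤ qhat ω}).toReal := by
  classical
  have hn1 : (0 : ℝ) < (n : ℝ) + 1 := by positivity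
  have hα' : (1 : ℝ) ≤ α * ((n : ℝ) + 1) := by
    rwa [div_le_iff₀ hn1] at hαn
  have hk1 : 1 ≤ k := by
    rw [hk]
    exact Nat.one_le_iff_ne_zero.2 (by
      rw [← Nat.pos_iff_ne_zero, Nat.ceil_pos]
      nlinarith)
  have hkn : k ≤ n := by
    rw [hk, Nat.ceil_le]
    push_cast
    nlinarith
  have hkn1 : k ≤ n + 1 := le_trans hkn (Nat.le_succ n)
  -- joint law
  set μ : Measure ℝ := P.map (s (Fin.last n)) with hμ
  haveI : IsProbabilityMeasure μ := Measure.isProbabilityMeasure_map (hmeas _).aemeasurable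
  set S : Ω → (Fin (n + 1) → ℝ) := fun ω i => s i ω with hSdef
  have hS : Measurable S := measurable_pi_lambda _ hmeas
  have hlaw : P.map S = Measure.pi (fun _ : Fin (n + 1) => μ) := by
    rw [show (fun _ : Fin (n + 1) => μ) = fun i => P.map (s i) from
      funext fun i => ((hident i (Fin.last n)).map_eq).symm]
    exact aux_joint_law P s hmeas hindep
  -- events
  set c : Fin (n + 1) → (Fin (n + 1) → ℝ) → ℕ :=
    fun j x => (univ.filter (fun i => x i < x j)).card with hc
  have hcmeas : ∀ j, Measurable (c j) := by
    intro j
    have : c j = fun x => ∑ i : Fin (n + 1), if x i < x j then 1 else 0 := by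
      funext x
      rw [hc]
      exact Finset.card_filter _ _
    rw [this]
    exact Finset.measurable_sum _ (fun i _ =>
      Measurable.ite (measurableSet_lt (measurable_pi_apply i) (measurable_pi_apply j))
        measurable_const measurable_const)
  set A : Fin (n + 1) → Set (Fin (n + 1) → ℝ) := fun j => {x | c j x < k} with hA
  have hAmeas : ∀ j, MeasurableSet (A j) := fun j =>
    (hcmeas j) (MeasurableSet.of_discrete (s := Set.Iio k))
  set E : Fin (n + 1) → Set Ω := fun j => S ⁻¹' A j with hE
  have hEmeas : ∀ j, MeasurableSet (E j) := fun j => hS (hAmeas j)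
  have hPE : ∀ j, P (E j) = (Measure.pi fun _ : Fin (n + 1) => μ) (A j) := by
    intro j
    rw [hE, ← Measure.map_apply hS (hAmeas j), hlaw]
  -- permutation invariance
  have hperm : ∀ j, (Measure.pi fun _ : Fin (n + 1) => μ) (A j) =
      (Measure.pi fun _ : Fin (n + 1) => μ) (A (Fin.last n)) := by
    intro j
    set σ : Equiv.Perm (Fin (n + 1)) := Equiv.swap j (Fin.last n) with hσ
    have hg : Measurable (fun (x : Fin (n + 1) → ℝ) i => x (σ i)) :=
      measurable_pi_lambda _ (fun i => measurable_pi_apply (σ i))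
    have hpre : (fun (x : Fin (n + 1) → ℝ) i => x (σ i)) ⁻¹' (A (Fin.last n)) = A j := by
      ext x
      simp only [hA, Set.mem_preimage, Set.mem_setOf_eq, hc]
      have h1 : σ (Fin.last n) = j := Equiv.swap_apply_right j (Fin.last n)
      simp only [h1]
      rw [aux_card_perm σ (fun i => x i < x j)]
    calc (Measure.pi fun _ : Fin (n + 1) => μ) (A j)
        = (Measure.pi fun _ : Fin (n + 1) => μ)
            ((fun (x : Fin (n + 1) → ℝ) i => x (σ i)) ⁻¹' (A (Fin.last n))) := by rw [hpre]
      _ = ((Measure.pi fun _ : Fin (n + 1) => μ).map (fun x i => x (σ i)))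
            (A (Fin.last n)) := (Measure.map_apply hg (hAmeas (Fin.last n))).symm
      _ = (Measure.pi fun _ : Fin (n + 1) => μ) (A (Fin.last n)) := by rw [aux_pi_perm]
  have hPEeq : ∀ j, P (E j) = P (E (Fin.last n)) := by
    intro j
    rw [hPE j, hperm j, ← hPE]
  -- pointwise counting bound
  have hpoint : ∀ ω, (k : ℝ≥0∞) ≤ ∑ j : Fin (n + 1),
      (E j).indicator (fun _ => (1 : ℝ≥0∞)) ω := by
    intro ω
    have h1 : ∑ j : Fin (n + 1), (E j).indicator (fun _ => (1 : ℝ≥0∞)) ω =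
        ((univ.filter (fun j : Fin (n + 1) => ω ∈ E j)).card : ℝ≥0∞) := by
      rw [Finset.card_filter]
      push_cast
      refine Finset.sum_congr rfl fun j _ => ?_
      by_cases hj : ω ∈ E j <;> simp [Set.indicator, hj]
    rw [h1]
    have h2 : k ≤ (univ.filter (fun j : Fin (n + 1) => ω ∈ E j)).card := by
      have := aux_count hk1 hkn1 (fun i => s i ω)
      refine le_trans this (le_of_eq (congrArg Finset.card (Finset.filter_congr
        (fun j _ => ?_))))
      constructor
      · intro hj; exact hj
      · intro hj; exact hj
    exact_mod_cast h2
  -- integrate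
  have hsum : (k : ℝ≥0∞) ≤ ∑ j : Fin (n + 1), P (E j) := by
    have h1 : ∀ j : Fin (n + 1), P (E j) =
        ∫⁻ ω, (E j).indicator (fun _ => (1 : ℝ≥0∞)) ω ∂P := by
      intro j
      rw [lintegral_indicator_const (hEmeas j), one_mul]
    calc (k : ℝ≥0∞) = ∫⁻ _, (k : ℝ≥0∞) ∂P := by
          rw [lintegral_const, measure_univ, mul_one]
      _ ≤ ∫⁻ ω, ∑ j : Fin (n + 1), (E j).indicator (fun _ => (1 : ℝ≥0∞)) ω ∂P :=
          lintegral_mono hpoint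
      _ = ∑ j : Fin (n + 1), ∫⁻ ω, (E j).indicator (fun _ => (1 : ℝ≥0∞)) ω ∂P :=
          lintegral_finset_sum _ (fun j _ => (measurable_one.indicator (hEmeas j)))
      _ = ∑ j : Fin (n + 1), P (E j) := by
          exact Finset.sum_congr rfl fun j _ => (h1 j).symm
  have hsum2 : (k : ℝ≥0∞) ≤ ((n : ℝ≥0∞) + 1) * P (E (Fin.last n)) := by
    calc (k : ℝ≥0∞) ≤ ∑ j : Fin (n + 1), P (E j) := hsum
      _ = ∑ _j : Fin (n + 1), P (E (Fin.last n)) :=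
          Finset.sum_congr rfl fun j _ => hPEeq j
      _ = ((n : ℝ≥0∞) + 1) * P (E (Fin.last n)) := by
          rw [Finset.sum_const, Finset.card_univ, Fintype.card_fin, nsmul_eq_mul]
          push_cast
          ring
  -- to real
  have hfin : P (E (Fin.last n)) ≤ 1 := prob_le_one
  have hkreal : (k : ℝ) ≤ ((n : ℝ) + 1) * (P (E (Fin.last n))).toReal := by
    have hne : ((n : ℝ≥0∞) + 1) * P (E (Fin.last n)) ≠ ⊤ :=
      ENNReal.mul_ne_top (by simp) (measure_ne_top _ _)
    have := ENNReal.toReal_mono hne hsum2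
    rw [ENNReal.toReal_mul] at this
    rw [ENNReal.toReal_add (by simp) (by simp)] at this; simpa using this
  -- identify the event
  have hevent : {ω | s (Fin.last n) ω ≤ qhat ω} = E (Fin.last n) := by
    ext ω
    simp only [Set.mem_setOf_eq, hE, Set.mem_preimage, hA, Set.mem_setOf_eq, hc, hSdef]
    rw [hqhat ω, aux_sInf hk1 hkn (fun i : Fin n => s i.castSucc ω) (s (Fin.last n) ω)]
    rw [aux_cast_card (fun i => s i ω)]
  rw [hevent]
  have hceil : ((n : ℝ) + 1) * (1 - α) ≤ (k : ℝ) := by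
    rw [hk]; exact Nat.le_ceil _
  nlinarith [hkreal, hceil, hn1]
end

section
/- (Conformal calibration coverage guarantee.) Let 𝒳 and 𝒴 be measurable spaces, let s : 𝒳 × 𝒴 → ℝ be a measurable score function, let n ≥ 1, and let α ∈ (0,1) satisfy α ≥ 1/(n+1). Suppose (X_1,Y_1), …, (X_{n+1},Y_{n+1}) are i.i.d. random pairs taking values in 𝒳 × 𝒴. Define the calibration scores s_i = s(X_i,Y_i) for i = 1,…,n, let q̂ be the k-th smallest value among s_1,…,s_n where k = ⌈(n+1)(1−α)⌉, and define the prediction set 𝒯(x) = {y ∈ 𝒴 : s(x,y) ≤ q̂}. Then P(Y_{n+1} ∈ 𝒯(X_{n+1})) ≥ 1 − α. -/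
open MeasureTheory ProbabilityTheory
open scoped ENNReal NNReal

lemma permFilterCard {ι : Type*} [Fintype ι] [DecidableEq ι] (e : Equiv.Perm ι)
    (p : ι → Prop) [DecidablePred p] :
    (Finset.univ.filter fun i => p (e i)).card = (Finset.univ.filter p).card := by
  apply Finset.card_bij (fun i _ => e i)
  · intro a ha; simp_all
  · intro a _ b _ h; exact e.injective h
  · intro b hb; exact ⟨e.symm b, by simp_all, by simp⟩

lemma le_sInf_of_rank_lt {n k : ℕ} (hk1 : 1 ≤ k) (hkn : k ≤ n) (s : Fin n → ℝ) (t : ℝ)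
    (h : (Finset.univ.filter (fun i => s i < t)).card < k) :
    t ≤ sInf {q : ℝ | k ≤ (Finset.univ.filter (fun i => s i ≤ q)).card} := by
  classical
  have hn : 0 < n := lt_of_lt_of_le hk1 hkn
  have hne : (Finset.univ : Finset (Fin n)).Nonempty := ⟨⟨0, hn⟩, Finset.mem_univ _⟩
  apply le_csInf
  · refine ⟨Finset.univ.sup' hne s, ?_⟩
    simp only [Set.mem_setOf_eq]
    have he : Finset.univ.filter (fun i => s i ≤ Finset.univ.sup' hne s) = Finset.univ := by
      ext i; simpa using ⟨i, le_refl (s i)⟩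
    rw [he, Finset.card_univ, Fintype.card_fin]; exact hkn
  · intro q hq
    by_contra hlt
    push_neg at hlt
    have hsub : Finset.univ.filter (fun i => s i ≤ q) ⊆ Finset.univ.filter (fun i => s i < t) := by
      intro i hi; simp only [Finset.mem_filter] at *
      exact ⟨hi.1, lt_of_le_of_lt hi.2 hlt⟩
    exact absurd (le_trans hq (Finset.card_le_card hsub)) (not_le.mpr h)

lemma rank_pigeonhole {N k : ℕ} (hk : k ≤ N) (f : Fin N → ℝ) :
    k ≤ (Finset.univ.filter (fun j => (Finset.univ.filter (fun i => f i < f j)).card < k)).card := by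
  classical
  set σ := Tuple.sort f with hσ
  have hmono := Tuple.monotone_sort f
  have key : ∀ m : Fin N, (m : ℕ) < k →
      (Finset.univ.filter (fun i => f i < f (σ m))).card < k := by
    intro m hm
    rw [← permFilterCard σ (fun i => f i < f (σ m))]
    have hsub : Finset.univ.filter (fun i => f (σ i) < f (σ m))
        ⊆ Finset.univ.filter (fun i : Fin N => i < m) := by
      intro i hi
      simp only [Finset.mem_filter, Finset.mem_univ, true_and] at *
      by_contra hge
      exact absurd (hmono (not_lt.mp hge)) (not_le.mpr hi)
    have hIio : Finset.univ.filter (fun i : Fin N => i < m) = Finset.Iio m := by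
      ext i; simp
    calc (Finset.univ.filter (fun i => f (σ i) < f (σ m))).card
        ≤ (Finset.univ.filter (fun i : Fin N => i < m)).card := Finset.card_le_card hsub
      _ = m := by rw [hIio, Fin.card_Iio]
      _ < k := hm
  have hinj : Set.InjOn (fun m : Fin k => σ (Fin.castLE hk m)) (Finset.univ : Finset (Fin k)) := by
    intro a _ b _ hab
    exact Fin.castLE_injective hk (σ.injective hab)
  have hmem : ∀ m ∈ (Finset.univ : Finset (Fin k)),
      σ (Fin.castLE hk m) ∈ Finset.univ.filter
        (fun j => (Finset.univ.filter (fun i => f i < f j)).card < k) := by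
    intro m _
    simp only [Finset.mem_filter, Finset.mem_univ, true_and]
    exact key _ (by simp [Fin.castLE])
  have := Finset.card_le_card_of_injOn _ hmem hinj
  simpa using this

/-- **Conformal calibration coverage guarantee.**
For i.i.d. pairs `(X_1,Y_1), …, (X_{n+1},Y_{n+1})`, a measurable score `s`, calibration
scores `s_i = s(X_i, Y_i)` for `i = 1,…,n`, `q̂` the `k`-th smallest calibration score with
`k = ⌈(n+1)(1-α)⌉`, and prediction sets `𝒯(x) = {y : s(x,y) ≤ q̂}`, we have
`P(Y_{n+1} ∈ 𝒯(X_{n+1})) ≥ 1 - α`. -/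
theorem conformal_calibration_coverage
    {Ω 𝒳 𝒴 : Type*} [MeasurableSpace Ω] [MeasurableSpace 𝒳] [MeasurableSpace 𝒴]
    (P : Measure Ω) [IsProbabilityMeasure P]
    (score : 𝒳 × 𝒴 → ℝ) (hscore : Measurable score)
    (n : ℕ) (hn : 1 ≤ n)
    (α : ℝ) (hα0 : 0 < α) (hα1 : α < 1) (hαn : 1 / ((n : ℝ) + 1) ≤ α)
    (X : Fin (n + 1) → Ω → 𝒳) (Y : Fin (n + 1) → Ω → 𝒴)
    (hXY : ∀ i, Measurable (fun ω => (X i ω, Y i ω)))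
    (hindep : iIndepFun (fun i ω => (X i ω, Y i ω)) P)
    (hident : ∀ i j, IdentDistrib (fun ω => (X i ω, Y i ω)) (fun ω => (X j ω, Y j ω)) P P)
    (k : ℕ) (hk : k = ⌈((n : ℝ) + 1) * (1 - α)⌉₊)
    (qhat : Ω → ℝ)
    (hqhat : ∀ ω, qhat ω =
      sInf {q : ℝ | k ≤ (Finset.univ.filter
        (fun i : Fin n => score (X i.castSucc ω, Y i.castSucc ω) ≤ q)).card})
    (T : Ω → 𝒳 → Set 𝒴)
    (hT : ∀ ω x, T ω x = {y : 𝒴 | score (x, y) ≤ qhat ω}) :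
    (1 : ℝ) - α ≤ (P {ω | Y (Fin.last n) ω ∈ T ω (X (Fin.last n) ω)}).toReal := by
  classical
  set Z : Fin (n+1) → Ω → 𝒳 × 𝒴 := fun i ω => (X i ω, Y i ω) with hZ
  -- bounds on k
  have hnpos : (0:ℝ) < (n:ℝ) + 1 := by positivity
  have hα' : (1:ℝ) ≤ α * ((n:ℝ)+1) := (div_le_iff₀ hnpos).mp hαn
  have hk1 : 1 ≤ k := by
    rw [hk]
    exact Nat.one_le_iff_ne_zero.mpr (by
      simp only [ne_eq, Nat.ceil_eq_zero, not_le]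
      nlinarith)
  have hkn : k ≤ n := by
    rw [hk, Nat.ceil_le]
    nlinarith
  have hkn1 : k ≤ n + 1 := hkn.trans (Nat.le_succ n)
  set μ : Measure (𝒳 × 𝒴) := P.map (Z 0) with hμ
  have hμprob : IsProbabilityMeasure μ := Measure.isProbabilityMeasure_map (hXY 0).aemeasurable
  have hmeasJ : Measurable (fun ω (i : Fin (n+1)) => Z i ω) :=
    measurable_pi_lambda _ (fun i => hXY i)
  have hmargin : ∀ i, P.map (Z i) = μ := fun i => (hident i 0).map_eq
  set ν : Measure (Fin (n+1) → 𝒳 × 𝒴) := Measure.pi (fun _ => μ) with hν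
  haveI hνprob : IsProbabilityMeasure ν := by rw [hν]; infer_instance
  have hmap : P.map (fun ω (i : Fin (n+1)) => Z i ω) = ν := by
    rw [hν]
    refine (Measure.pi_eq (μ := fun _ : Fin (n+1) => μ) (fun s hs => ?_)).symm
    rw [Measure.map_apply hmeasJ (MeasurableSet.univ_pi hs)]
    have hpre : (fun ω (i : Fin (n+1)) => Z i ω) ⁻¹' (Set.univ.pi s)
        = ⋂ i ∈ Finset.univ, Z i ⁻¹' s i := by
      ext ω; simp [Set.mem_pi]
    rw [hpre, hindep.measure_inter_preimage_eq_mul Finset.univ (fun i _ => hs i)]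
    exact Finset.prod_congr rfl (fun i _ => by
      rw [← hmargin i, Measure.map_apply (hXY i) (hs i)])
  set A : Fin (n+1) → Set (Fin (n+1) → 𝒳 × 𝒴) := fun j =>
    {g | (Finset.univ.filter (fun i => score (g i) < score (g j))).card < k} with hA
  have hcard_meas : ∀ j, Measurable (fun g : Fin (n+1) → 𝒳 × 𝒴 =>
      (Finset.univ.filter (fun i => score (g i) < score (g j))).card) := by
    intro j
    have heq : (fun g : Fin (n+1) → 𝒳 × 𝒴 =>
        (Finset.univ.filter (fun i => score (g i) < score (g j))).card)
        = fun g => ∑ i : Fin (n+1), if score (g i) < score (g j) then 1 else 0 := by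
      funext g; rw [Finset.card_filter]
    rw [heq]
    apply Finset.measurable_sum
    intro i _
    exact Measurable.ite
      (measurableSet_lt (hscore.comp (measurable_pi_apply i))
        (hscore.comp (measurable_pi_apply j)))
      measurable_const measurable_const
  have hAmeas : ∀ j, MeasurableSet (A j) := by
    intro j
    have : A j = (fun g : Fin (n+1) → 𝒳 × 𝒴 =>
        (Finset.univ.filter (fun i => score (g i) < score (g j))).card) ⁻¹' {m | m < k} := rfl
    rw [this]
    exact (hcard_meas j) ((Set.to_countable _).measurableSet)
  -- event inclusion
  have hEsub : (fun ω (i : Fin (n+1)) => Z i ω) ⁻¹' (A (Fin.last n))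
      ⊆ {ω | Y (Fin.last n) ω ∈ T ω (X (Fin.last n) ω)} := by
    intro ω hω
    simp only [Set.mem_preimage, hA, Set.mem_setOf_eq] at hω
    have hcount : (Finset.univ.filter
        (fun i : Fin n => score (Z i.castSucc ω) < score (Z (Fin.last n) ω))).card
        ≤ (Finset.univ.filter
        (fun i : Fin (n+1) => score (Z i ω) < score (Z (Fin.last n) ω))).card := by
      apply Finset.card_le_card_of_injOn (fun i => i.castSucc)
      · intro i hi; simp only [Finset.coe_filter, Finset.mem_univ, true_and, Set.mem_setOf_eq] at *; exact hi
      · intro a _ b _ hab; exact Fin.castSucc_injective n hab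
    have hlt := lt_of_le_of_lt hcount hω
    have hle := le_sInf_of_rank_lt hk1 hkn
      (fun i => score (Z i.castSucc ω)) (score (Z (Fin.last n) ω)) hlt
    simp only [Set.mem_setOf_eq, hT, hqhat]
    exact hle
  have hPA : ν (A (Fin.last n)) ≤ P {ω | Y (Fin.last n) ω ∈ T ω (X (Fin.last n) ω)} := by
    rw [← hmap, Measure.map_apply hmeasJ (hAmeas _)]
    exact measure_mono hEsub
  -- symmetry
  have hsymm : ∀ j, ν (A j) = ν (A (Fin.last n)) := by
    intro j
    set τ : Equiv.Perm (Fin (n+1)) := Equiv.swap j (Fin.last n) with hτ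
    have hmp := measurePreserving_piCongrLeft (fun _ : Fin (n+1) => μ) τ
    set e : (Fin (n+1) → 𝒳 × 𝒴) ≃ᵐ (Fin (n+1) → 𝒳 × 𝒴) :=
      MeasurableEquiv.piCongrLeft (fun _ => 𝒳 × 𝒴) τ with he
    have happ : ∀ (g : Fin (n+1) → 𝒳 × 𝒴) (b : Fin (n+1)), e g b = g (τ.symm b) := by
      intro g b
      have h := Equiv.piCongrLeft_apply_apply (fun _ : Fin (n+1) => 𝒳 × 𝒴) τ g (τ.symm b)
      rw [Equiv.apply_symm_apply] at h
      simp only [he, MeasurableEquiv.coe_piCongrLeft]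
      exact h
    have hpre : e ⁻¹' (A j) = A (Fin.last n) := by
      ext g
      simp only [Set.mem_preimage, hA, Set.mem_setOf_eq]
      have hj : e g j = g (Fin.last n) := by
        rw [happ]; congr 1
        rw [hτ, Equiv.symm_swap, Equiv.swap_apply_left]
      have h2 : (Finset.univ.filter (fun i => score (e g i) < score (e g j))).card
          = (Finset.univ.filter (fun i => score (g (τ.symm i)) < score (g (Fin.last n)))).card := by
        congr 1; apply Finset.filter_congr; intro i _
        rw [happ, hj]
      rw [h2, permFilterCard τ.symm (fun i => score (g i) < score (g (Fin.last n)))]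
    calc ν (A j) = (ν.map e) (A j) := by rw [hmp.map_eq]
      _ = ν (e ⁻¹' (A j)) := MeasurableEquiv.map_apply e _
      _ = ν (A (Fin.last n)) := by rw [hpre]
  -- sum bound
  have hsum : (k : ℝ≥0∞) ≤ ∑ j : Fin (n+1), ν (A j) := by
    have hind : ∀ j, ν (A j) = ∫⁻ g, (A j).indicator (fun _ => (1:ℝ≥0∞)) g ∂ν := by
      intro j
      exact (lintegral_indicator_one (hAmeas j)).symm
    calc (k : ℝ≥0∞) = ∫⁻ _, (k : ℝ≥0∞) ∂ν := by simp
      _ ≤ ∫⁻ g, ∑ j : Fin (n+1), (A j).indicator (fun _ => (1:ℝ≥0∞)) g ∂ν := by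
          apply lintegral_mono
          intro g
          show (k:ℝ≥0∞) ≤ ∑ j : Fin (n+1), (A j).indicator (fun _ => (1:ℝ≥0∞)) g
          have hB := rank_pigeonhole hkn1 (fun i => score (g i))
          have hcnt : ∑ j : Fin (n+1), (A j).indicator (fun _ => (1:ℝ≥0∞)) g
              = ((Finset.univ.filter (fun j : Fin (n+1) =>
                  (Finset.univ.filter (fun i => score (g i) < score (g j))).card < k)).card : ℝ≥0∞) := by
            rw [Finset.card_filter, Nat.cast_sum]
            apply Finset.sum_congr rfl
            intro j _
            by_cases h : (Finset.univ.filter (fun i => score (g i) < score (g j))).card < k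
            · rw [Set.indicator_of_mem (by exact h) _]; simp [h]
            · rw [Set.indicator_of_notMem (by exact h) _]; simp [h]
          rw [hcnt]
          exact_mod_cast hB
      _ = ∑ j : Fin (n+1), ∫⁻ g, (A j).indicator (fun _ => (1:ℝ≥0∞)) g ∂ν :=
          lintegral_finset_sum _ (fun j _ => (measurable_const.indicator (hAmeas j)))
      _ = ∑ j : Fin (n+1), ν (A j) := by
          exact Finset.sum_congr rfl (fun j _ => (hind j).symm)
  have hfin : (k : ℝ≥0∞) ≤ ((n:ℝ≥0∞) + 1) * ν (A (Fin.last n)) := by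
    calc (k:ℝ≥0∞) ≤ ∑ j : Fin (n+1), ν (A j) := hsum
      _ = ∑ _j : Fin (n+1), ν (A (Fin.last n)) := Finset.sum_congr rfl (fun j _ => hsymm j)
      _ = ((n:ℝ≥0∞) + 1) * ν (A (Fin.last n)) := by
          rw [Finset.sum_const, Finset.card_univ, Fintype.card_fin, nsmul_eq_mul]
          push_cast; ring
  -- to real
  have hνne : ν (A (Fin.last n)) ≠ ⊤ := measure_ne_top ν _
  have htr : (k : ℝ) ≤ ((n:ℝ) + 1) * (ν (A (Fin.last n))).toReal := by
    have h1 : (((n:ℝ≥0∞) + 1) * ν (A (Fin.last n))) ≠ ⊤ :=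
      ENNReal.mul_ne_top (by simp) hνne
    have := ENNReal.toReal_mono h1 hfin
    rw [ENNReal.toReal_mul, ENNReal.toReal_add (by simp) (by simp)] at this
    simpa using this
  have hceil : ((n:ℝ)+1) * (1 - α) ≤ (k:ℝ) := by rw [hk]; exact Nat.le_ceil _
  have hstep : 1 - α ≤ (ν (A (Fin.last n))).toReal := by nlinarith
  have hmono := ENNReal.toReal_mono (measure_ne_top P _) hPA
  linarith
end

section
/- (Conformal calibration upper bound.) Let 𝒳 and 𝒴 be measurable spaces, let s : 𝒳 × 𝒴 → ℝ be a measurable score function, let n ≥ 1, and let α ∈ (0,1) satisfy α ≥ 1/(n+1). Suppose (X_1,Y_1), …, (X_{n+1},Y_{n+1}) are i.i.d. random pairs taking values in 𝒳 × 𝒴, and suppose in addition that the scores s_i = s(X_i,Y_i), i = 1,…,n+1, are almost surely pairwise distinct (e.g., their joint distribution is continuous). Let q̂ be the k-th smallest value among s_1,…,s_n where k = ⌈(n+1)(1−α)⌉, and define 𝒯(x) = {y ∈ 𝒴 : s(x,y) ≤ q̂}. Then P(Y_{n+1} ∈ 𝒯(X_{n+1})) ≤ 1 − α + 1/(n+1).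 -/
open MeasureTheory ProbabilityTheory
open scoped ENNReal

private lemma rank_lt_rank' {n : ℕ} {v : Fin (n+1) → ℝ}
    {a b : Fin (n+1)} (hab : v a < v b) :
    (Finset.univ.filter fun i => v i ≤ v a).card < (Finset.univ.filter fun i => v i ≤ v b).card := by
  apply Finset.card_lt_card
  rw [Finset.ssubset_iff_of_subset]
  · exact ⟨b, by simp, by simp [not_le.mpr hab]⟩
  · intro i hi
    simp only [Finset.mem_filter, Finset.mem_univ, true_and] at *
    exact hi.trans hab.le

private lemma card_rank_le' {n : ℕ} {v : Fin (n+1) → ℝ} (hv : Function.Injective v)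
    {k : ℕ} (hk : k ≤ n + 1) :
    (Finset.univ.filter fun j => (Finset.univ.filter fun i => v i ≤ v j).card ≤ k).card = k := by
  set r : Fin (n+1) → ℕ := fun j => (Finset.univ.filter fun i => v i ≤ v j).card with hr
  have hrinj : Function.Injective r := by
    intro a b hab
    by_contra hne
    have hvne : v a ≠ v b := fun h => hne (hv h)
    rcases lt_or_gt_of_ne hvne with h | h
    · exact absurd hab (ne_of_lt (rank_lt_rank' h))
    · exact absurd hab.symm (ne_of_lt (rank_lt_rank' h))
  have himg : Finset.univ.image r = Finset.Icc 1 (n+1) := by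
    apply Finset.eq_of_subset_of_card_le
    · intro m hm
      simp only [Finset.mem_image] at hm
      obtain ⟨j, -, rfl⟩ := hm
      simp only [Finset.mem_Icc]
      refine ⟨Finset.card_pos.mpr ⟨j, by simp⟩, ?_⟩
      simpa using (Finset.card_filter_le (Finset.univ : Finset (Fin (n+1))) _)
    · rw [Nat.card_Icc, Finset.card_image_of_injective _ hrinj]
      simp
  have key : (Finset.univ.filter fun j => r j ≤ k).image r
      = (Finset.univ.image r).filter (fun m => m ≤ k) := by
    ext m
    simp only [Finset.mem_image, Finset.mem_filter, Finset.mem_univ, true_and]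
    constructor
    · rintro ⟨j, hj, rfl⟩; exact ⟨⟨j, rfl⟩, hj⟩
    · rintro ⟨⟨j, rfl⟩, hm⟩; exact ⟨j, hm, rfl⟩
  have hcard := congrArg Finset.card key
  rw [Finset.card_image_of_injective _ hrinj, himg] at hcard
  rw [hcard]
  have hIcc : (Finset.Icc 1 (n+1)).filter (fun m => m ≤ k) = Finset.Icc 1 k := by
    ext m
    simp only [Finset.mem_filter, Finset.mem_Icc]
    omega
  rw [hIcc, Nat.card_Icc]
  omega

private lemma qhat_char' {n : ℕ} (hn : 1 ≤ n) {k : ℕ} (hk1 : 1 ≤ k) (hkn : k ≤ n)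
    {v : Fin (n+1) → ℝ} (hv : Function.Injective v) :
    v (Fin.last n) ≤ sInf {q : ℝ | k ≤ (Finset.univ.filter
        (fun i : Fin n => v i.castSucc ≤ q)).card}
    ↔ (Finset.univ.filter fun i : Fin (n+1) => v i ≤ v (Fin.last n)).card ≤ k := by
  have hne : Nonempty (Fin n) := ⟨⟨0, hn⟩⟩
  set Q : Set ℝ := {q : ℝ | k ≤ (Finset.univ.filter
      (fun i : Fin n => v i.castSucc ≤ q)).card} with hQ
  have hQne : Q.Nonempty := by
    refine ⟨Finset.univ.sup' Finset.univ_nonempty (fun i : Fin n => v i.castSucc), ?_⟩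
    simp only [hQ, Set.mem_setOf_eq]
    have h1 : Finset.univ.filter (fun i : Fin n =>
        v i.castSucc ≤ Finset.univ.sup' Finset.univ_nonempty (fun i : Fin n => v i.castSucc))
        = Finset.univ := by
      apply Finset.filter_true_of_mem
      intro i _
      exact Finset.le_sup' (fun i : Fin n => v i.castSucc) (Finset.mem_univ i)
    rw [h1]
    simpa using hkn
  have hQbdd : BddBelow Q := by
    refine ⟨Finset.univ.inf' Finset.univ_nonempty (fun i : Fin n => v i.castSucc), ?_⟩
    intro q hq
    have hpos : 0 < (Finset.univ.filter (fun i : Fin n => v i.castSucc ≤ q)).card := by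
      have := hq
      simp only [hQ, Set.mem_setOf_eq] at this
      omega
    obtain ⟨i, hi⟩ := Finset.card_pos.mp hpos
    simp only [Finset.mem_filter] at hi
    exact le_trans (Finset.inf'_le _ (Finset.mem_univ i)) hi.2
  have hsplit : (Finset.univ.filter fun i : Fin (n+1) => v i ≤ v (Fin.last n)).card
      = (Finset.univ.filter (fun i : Fin n => v i.castSucc ≤ v (Fin.last n))).card + 1 := by
    rw [Fin.univ_castSuccEmb, Finset.filter_cons, if_pos (le_refl _), Finset.card_cons,
      Finset.filter_map, Finset.card_map]
    rfl
  constructor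
  · intro h
    rw [hsplit]
    by_contra hcon
    push_neg at hcon
    set F := Finset.univ.filter (fun i : Fin n => v i.castSucc ≤ v (Fin.last n)) with hF
    have hFcard : k ≤ F.card := by omega
    have hFne : F.Nonempty := Finset.card_pos.mp (by omega)
    set q0 := F.sup' hFne (fun i => v i.castSucc) with hq0
    have hq0Q : q0 ∈ Q := by
      simp only [hQ, Set.mem_setOf_eq]
      refine le_trans hFcard (Finset.card_le_card ?_)
      intro i hi
      simp only [Finset.mem_filter, Finset.mem_univ, true_and]
      exact Finset.le_sup' (fun i : Fin n => v i.castSucc) hi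
    have hlast : v (Fin.last n) ≤ q0 := (le_csInf_iff hQbdd hQne).mp h q0 hq0Q
    have hlt : q0 < v (Fin.last n) := by
      rw [hq0, Finset.sup'_lt_iff]
      intro i hi
      simp only [hF, Finset.mem_filter] at hi
      refine lt_of_le_of_ne hi.2 ?_
      intro heq
      exact absurd (hv heq) (Fin.castSucc_lt_last i).ne
    linarith
  · intro h
    rw [le_csInf_iff hQbdd hQne]
    intro q hq
    by_contra hcon
    push_neg at hcon
    have hsub : Finset.univ.filter (fun i : Fin n => v i.castSucc ≤ q)
        ⊆ Finset.univ.filter (fun i : Fin n => v i.castSucc ≤ v (Fin.last n)) := by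
      intro i hi
      simp only [Finset.mem_filter, Finset.mem_univ, true_and] at *
      exact hi.trans hcon.le
    have h1 := Finset.card_le_card hsub
    simp only [hQ, Set.mem_setOf_eq] at hq
    omega

/-- **Conformal calibration upper bound.**
In the setting of split conformal prediction with i.i.d. pairs and almost surely distinct
scores `s(X_i, Y_i)`, `i = 1,…,n+1`, the coverage is also upper bounded:
`P(Y_{n+1} ∈ 𝒯(X_{n+1})) ≤ 1 - α + 1/(n+1)`. -/
theorem conformal_calibration_upper_bound
    {Ω 𝒳 𝒴 : Type*} [MeasurableSpace Ω] [MeasurableSpace 𝒳] [MeasurableSpace 𝒴]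
    (P : Measure Ω) [IsProbabilityMeasure P]
    (score : 𝒳 × 𝒴 → ℝ) (hscore : Measurable score)
    (n : ℕ) (hn : 1 ≤ n)
    (α : ℝ) (hα0 : 0 < α) (hα1 : α < 1) (hαn : 1 / ((n : ℝ) + 1) ≤ α)
    (X : Fin (n + 1) → Ω → 𝒳) (Y : Fin (n + 1) → Ω → 𝒴)
    (hXY : ∀ i, Measurable (fun ω => (X i ω, Y i ω)))
    (hindep : iIndepFun (fun i ω => (X i ω, Y i ω)) P)
    (hident : ∀ i j, IdentDistrib (fun ω => (X i ω, Y i ω)) (fun ω => (X j ω, Y j ω)) P P)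
    (hdistinct : ∀ i j, i ≠ j →
      P {ω | score (X i ω, Y i ω) = score (X j ω, Y j ω)} = 0)
    (k : ℕ) (hk : k = ⌈((n : ℝ) + 1) * (1 - α)⌉₊)
    (qhat : Ω → ℝ)
    (hqhat : ∀ ω, qhat ω =
      sInf {q : ℝ | k ≤ (Finset.univ.filter
        (fun i : Fin n => score (X i.castSucc ω, Y i.castSucc ω) ≤ q)).card})
    (T : Ω → 𝒳 → Set 𝒴)
    (hT : ∀ ω x, T ω x = {y : 𝒴 | score (x, y) ≤ qhat ω}) :
    (P {ω | Y (Fin.last n) ω ∈ T ω (X (Fin.last n) ω)}).toReal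
      ≤ 1 - α + 1 / ((n : ℝ) + 1) := by
  classical
  have hs : ∀ i, Measurable (fun ω => score (X i ω, Y i ω)) := fun i => hscore.comp (hXY i)
  set S : Ω → (Fin (n+1) → ℝ) := fun ω i => score (X i ω, Y i ω) with hS_def
  have hS : Measurable S := measurable_pi_lambda _ hs
  set μ := P.map (fun ω => score (X (Fin.last n) ω, Y (Fin.last n) ω)) with hμ_def
  have hμi : ∀ i, P.map (fun ω => score (X i ω, Y i ω)) = μ :=
    fun i => ((hident i (Fin.last n)).comp hscore).map_eq
  set ν := P.map S with hν_def
  haveI hνprob : IsProbabilityMeasure ν := Measure.isProbabilityMeasure_map hS.aemeasurable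
  -- numeric facts about k
  have hnpos : (0:ℝ) < (n:ℝ) + 1 := by positivity
  have hx0 : (0:ℝ) < ((n:ℝ)+1)*(1-α) := by nlinarith
  have hk1 : 1 ≤ k := by rw [hk, Nat.one_le_ceil_iff]; exact hx0
  have hkn : k ≤ n := by
    rw [hk, Nat.ceil_le]
    have h1 : ((n:ℝ)+1) * (1/((n:ℝ)+1)) = 1 := by field_simp
    nlinarith
  -- the joint law is a product
  haveI hμprob : IsProbabilityMeasure μ := Measure.isProbabilityMeasure_map (hs (Fin.last n)).aemeasurable
  have hνpi : ν = Measure.pi (fun _ : Fin (n+1) => μ) := by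
    rw [hν_def]
    refine (Measure.pi_eq ?_).symm
    intro sets hsets
    rw [Measure.map_apply hS (MeasurableSet.univ_pi hsets)]
    have hpre : S ⁻¹' Set.pi Set.univ sets
        = ⋂ i, (fun ω => score (X i ω, Y i ω)) ⁻¹' sets i := by
      ext ω
      simp [hS_def, Set.mem_pi]
    rw [hpre]
    have hindS : iIndepFun
        (fun i ω => score (X i ω, Y i ω)) P :=
      hindep.comp (fun _ => score) (fun _ => hscore)
    rw [hindS.meas_iInter (fun i => ⟨sets i, hsets i, rfl⟩)]
    refine Finset.prod_congr rfl fun i _ => ?_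
    rw [← hμi i, Measure.map_apply (hs i) (hsets i)]
  -- the injectivity set
  set D : Set (Fin (n+1) → ℝ) := {v | Function.Injective v} with hD_def
  have hDm : MeasurableSet D := by
    have hDeq : D = ⋂ (i) (j) (_ : i ≠ j), {v : Fin (n+1) → ℝ | v i = v j}ᶜ := by
      ext v
      simp only [Set.mem_iInter, Set.mem_compl_iff, Set.mem_setOf_eq, hD_def]
      constructor
      · intro hv i j hij h; exact hij (hv h)
      · intro h a b hab; by_contra hne; exact h a b hne hab
    rw [hDeq]
    exact MeasurableSet.iInter fun i => MeasurableSet.iInter fun j => MeasurableSet.iInter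
      fun _ => (measurableSet_eq_fun (measurable_pi_apply i) (measurable_pi_apply j)).compl
  have hDc : ν Dᶜ = 0 := by
    have hsub : Dᶜ ⊆ ⋃ (i) (j) (_ : i ≠ j), {v : Fin (n+1) → ℝ | v i = v j} := by
      intro v hv
      simp only [Set.mem_compl_iff, hD_def, Set.mem_setOf_eq, Function.Injective] at hv
      push_neg at hv
      obtain ⟨a, b, hab, hne⟩ := hv
      exact Set.mem_iUnion.mpr ⟨a, Set.mem_iUnion.mpr ⟨b, Set.mem_iUnion.mpr ⟨hne, hab⟩⟩⟩
    refine measure_mono_null hsub ?_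
    refine measure_iUnion_null fun i => measure_iUnion_null fun j => measure_iUnion_null
      fun hij => ?_
    rw [hν_def, Measure.map_apply hS
      (measurableSet_eq_fun (measurable_pi_apply i) (measurable_pi_apply j))]
    exact hdistinct i j hij
  have hνD : ν D = 1 := (prob_compl_eq_zero_iff₀ hDm.nullMeasurableSet).mp hDc
  -- the rank events
  set B : Fin (n+1) → Set (Fin (n+1) → ℝ) :=
    fun j => {v | (Finset.univ.filter fun i => v i ≤ v j).card ≤ k} with hB_def
  have hBm : ∀ j, MeasurableSet (B j) := by
    intro j
    have hc : Measurable (fun v : Fin (n+1) → ℝ =>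
        (Finset.univ.filter fun i => v i ≤ v j).card) := by
      simp_rw [Finset.card_filter]
      exact Finset.measurable_sum _ fun i _ =>
        Measurable.ite (measurableSet_le (measurable_pi_apply i) (measurable_pi_apply j))
          measurable_const measurable_const
    exact measurableSet_le hc measurable_const
  -- exchangeability: all B j ∩ D have the same measure
  have hswap : ∀ j : Fin (n+1), ν (B j ∩ D) = ν (B (Fin.last n) ∩ D) := by
    intro j
    set e := Equiv.swap j (Fin.last n) with he
    set g := MeasurableEquiv.piCongrLeft (fun _ : Fin (n+1) => ℝ) e with hg_def
    have hgp : MeasurePreserving g ν ν := by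
      rw [hνpi]
      exact measurePreserving_piCongrLeft (fun _ => μ) e
    have hsl : e.symm (Fin.last n) = j := by
      rw [he, Equiv.symm_swap, Equiv.swap_apply_right]
    have hga : ∀ (v : Fin (n+1) → ℝ) (i : Fin (n+1)), g v i = v (e.symm i) := by
      intro v i
      have h := MeasurableEquiv.piCongrLeft_apply_apply (β := fun _ : Fin (n+1) => ℝ)
        e v (e.symm i)
      simpa using h
    have hpre : g ⁻¹' (B (Fin.last n) ∩ D) = B j ∩ D := by
      ext v
      have hglast : g v (Fin.last n) = v j := by
        rw [hga, hsl]
      have hcardeq : (Finset.univ.filter fun i => g v i ≤ g v (Fin.last n)).card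
          = (Finset.univ.filter fun i => v i ≤ v j).card := by
        have hfe : (Finset.univ.filter fun i => g v i ≤ g v (Fin.last n))
            = (Finset.univ.filter fun i => v i ≤ v j).image e := by
          ext i
          simp only [Finset.mem_filter, Finset.mem_univ, true_and, Finset.mem_image,
            hga, hsl]
          constructor
          · intro h; exact ⟨e.symm i, h, by simp⟩
          · rintro ⟨a, ha, rfl⟩; simpa using ha
        rw [hfe, Finset.card_image_of_injective _ e.injective]
      have hinj : Function.Injective (g v) ↔ Function.Injective v := by
        have hcomp : g v = v ∘ e.symm := funext (hga v)
        rw [hcomp]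
        constructor
        · intro h
          have : v = (v ∘ ⇑e.symm) ∘ ⇑e := by ext i; simp
          rw [this]
          exact h.comp e.injective
        · exact fun h => h.comp e.symm.injective
      simp only [Set.mem_preimage, Set.mem_inter_iff, hB_def, Set.mem_setOf_eq, hD_def,
        hcardeq, hinj]
    rw [← hpre]
    exact hgp.measure_preimage_equiv _
  -- counting: the sum of the measures is k
  have hsum : ∑ j : Fin (n+1), ν (B j ∩ D) = (k : ℝ≥0∞) := by
    have h1 : ∀ j : Fin (n+1), ν (B j ∩ D) = ∫⁻ v, (B j ∩ D).indicator 1 v ∂ν :=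
      fun j => (lintegral_indicator_one ((hBm j).inter hDm)).symm
    simp_rw [h1]
    rw [← lintegral_finset_sum _ (fun j _ => measurable_one.indicator ((hBm j).inter hDm))]
    have h2 : ∀ v, ∑ j : Fin (n+1), (B j ∩ D).indicator (1 : (Fin (n+1) → ℝ) → ℝ≥0∞) v
        = D.indicator (fun _ => (k : ℝ≥0∞)) v := by
      intro v
      by_cases hvD : v ∈ D
      · rw [Set.indicator_of_mem hvD]
        have h3 : ∀ j : Fin (n+1), (B j ∩ D).indicator (1 : (Fin (n+1) → ℝ) → ℝ≥0∞) v
            = if v ∈ B j then 1 else 0 := by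
          intro j
          by_cases hbj : v ∈ B j
          · rw [Set.indicator_of_mem (Set.mem_inter hbj hvD), if_pos hbj]; rfl
          · rw [Set.indicator_of_notMem (fun h => hbj h.1), if_neg hbj]
        simp_rw [h3]
        have h4 : ∑ j : Fin (n+1), (if v ∈ B j then (1:ℝ≥0∞) else 0)
            = ((Finset.univ.filter fun j => v ∈ B j).card : ℝ≥0∞) := by
          rw [Finset.card_filter]
          push_cast
          refine Finset.sum_congr rfl fun j _ => ?_
          split <;> simp
        rw [h4]
        have h5 : (Finset.univ.filter fun j => v ∈ B j).card = k := by
          have heq : (Finset.univ.filter fun j => v ∈ B j)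
              = (Finset.univ.filter fun j =>
                  (Finset.univ.filter fun i => v i ≤ v j).card ≤ k) := by
            apply Finset.filter_congr
            intro j _
            simp [hB_def]
          rw [heq]
          exact card_rank_le' hvD (by omega)
        rw [h5]
      · rw [Set.indicator_of_notMem hvD]
        refine Finset.sum_eq_zero fun j _ => ?_
        exact Set.indicator_of_notMem (fun h => hvD h.2) _
    simp_rw [h2]
    rw [lintegral_indicator_const hDm, hνD, mul_one]
  -- conclude the measure of B last ∩ D
  have hcount : ν (B (Fin.last n) ∩ D) = (k : ℝ≥0∞) / ((n : ℝ≥0∞) + 1) := by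
    have h6 : ∑ j : Fin (n+1), ν (B j ∩ D) = ((n:ℝ≥0∞)+1) * ν (B (Fin.last n) ∩ D) := by
      rw [Finset.sum_congr rfl fun j _ => hswap j, Finset.sum_const, Finset.card_univ,
        Fintype.card_fin]
      rw [nsmul_eq_mul]
      push_cast
      ring
    rw [ENNReal.eq_div_iff (by simp) (by simp), ← h6, hsum]
  -- relate the event to v-space
  have hevent : {ω | Y (Fin.last n) ω ∈ T ω (X (Fin.last n) ω)}
      = S ⁻¹' {v : Fin (n+1) → ℝ | v (Fin.last n) ≤ sInf {q : ℝ | k ≤ (Finset.univ.filter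
          (fun i : Fin n => v i.castSucc ≤ q)).card}} := by
    ext ω
    simp only [Set.mem_setOf_eq, hT, Set.mem_preimage, hqhat, hS_def]
  set E := {v : Fin (n+1) → ℝ | v (Fin.last n) ≤ sInf {q : ℝ | k ≤ (Finset.univ.filter
      (fun i : Fin n => v i.castSucc ≤ q)).card}} with hE_def
  have hEsub : E ⊆ (B (Fin.last n) ∩ D) ∪ Dᶜ := by
    intro v hv
    by_cases hvD : v ∈ D
    · exact Or.inl ⟨(qhat_char' hn hk1 hkn hvD).mp hv, hvD⟩
    · exact Or.inr hvD
  have hbound : P {ω | Y (Fin.last n) ω ∈ T ω (X (Fin.last n) ω)}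
      ≤ (k : ℝ≥0∞) / ((n : ℝ≥0∞) + 1) := by
    calc P {ω | Y (Fin.last n) ω ∈ T ω (X (Fin.last n) ω)}
        ≤ P (S ⁻¹' ((B (Fin.last n) ∩ D) ∪ Dᶜ)) := by
          rw [hevent]; exact measure_mono (Set.preimage_mono hEsub)
      _ ≤ P (S ⁻¹' (B (Fin.last n) ∩ D)) + P (S ⁻¹' Dᶜ) := by
          rw [Set.preimage_union]; exact measure_union_le _ _
      _ = ν (B (Fin.last n) ∩ D) + ν Dᶜ := by
          rw [hν_def, Measure.map_apply hS ((hBm _).inter hDm),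
            Measure.map_apply hS hDm.compl]
      _ = (k : ℝ≥0∞) / ((n : ℝ≥0∞) + 1) := by rw [hcount, hDc, add_zero]
  -- final numeric computation
  have htop : ((k : ℝ≥0∞) / ((n : ℝ≥0∞) + 1)) ≠ ⊤ := by
    exact (ENNReal.div_lt_top (by simp) (by simp)).ne
  have hto := ENNReal.toReal_mono htop hbound
  refine le_trans hto ?_
  have hdiv : ((k : ℝ≥0∞) / ((n : ℝ≥0∞) + 1)).toReal = (k : ℝ) / ((n : ℝ) + 1) := by
    rw [show ((n:ℝ≥0∞)+1) = ((n+1:ℕ):ℝ≥0∞) by push_cast; ring, ENNReal.toReal_div,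
      ENNReal.toReal_natCast, ENNReal.toReal_natCast]
    push_cast
    ring
  rw [hdiv]
  rw [div_le_iff₀ hnpos]
  have hklt : (k : ℝ) < ((n:ℝ)+1)*(1-α) + 1 := by
    rw [hk]
    exact Nat.ceil_lt_add_one hx0.le
  have h1 : ((n:ℝ)+1) * (1/((n:ℝ)+1)) = 1 := by field_simp
  nlinarith
end

section
/- Let n ≥ 1 and let s_1, …, s_{n+1} be exchangeable real-valued random variables that are almost surely pairwise distinct. For every integer k with 1 ≤ k ≤ n, letting s_{(k)} denote the k-th smallest value among s_1, …, s_n, one has P(s_{n+1} ≤ s_{(k)}) = k/(n+1). -/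
open MeasureTheory ProbabilityTheory
open Finset
open scoped ENNReal

lemma aux_card_filter_comp {α β : Type*} [Fintype α] [Fintype β] [DecidableEq α] [DecidableEq β]
    (e : α ≃ β) (p : β → Prop) [DecidablePred p] :
    (univ.filter fun j => p (e j)).card = (univ.filter p).card := by
  have h : (univ.filter p) = (univ.filter fun j => p (e j)).map e.toEmbedding := by
    ext b
    simp only [mem_map, mem_filter, mem_univ, true_and, Equiv.coe_toEmbedding]
    constructor
    · intro hb; exact ⟨e.symm b, by simpa using hb, by simp⟩
    · rintro ⟨a, ha, rfl⟩; exact ha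
  rw [h, Finset.card_map]

lemma aux_card_filter_lt (N k : ℕ) (hk : k ≤ N) :
    ((univ : Finset (Fin N)).filter fun m : Fin N => (m : ℕ) < k).card = k := by
  have h : ((univ : Finset (Fin N)).filter fun m : Fin N => (m : ℕ) < k)
      = (univ : Finset (Fin k)).map (Fin.castLEEmb hk) := by
    ext m
    simp only [mem_filter, mem_univ, true_and, mem_map, Fin.castLEEmb, Fin.castLE]
    constructor
    · intro hm; exact ⟨⟨(m : ℕ), hm⟩, by cases m; rfl⟩
    · rintro ⟨a, rfl⟩; exact a.isLt.trans_le (le_refl k) |>.trans_le hk |> fun _ => a.isLt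
  rw [h, Finset.card_map, Finset.card_univ, Fintype.card_fin]

lemma aux_rank_count {N : ℕ} (v : Fin N → ℝ) (hv : Function.Injective v) (k : ℕ) (hk : k ≤ N) :
    ((univ.filter fun i => ((univ.filter fun j => v j < v i).card) < k).card) = k := by
  set r : Fin N → ℕ := fun i => (univ.filter fun j => v j < v i).card with hr
  have hrlt : ∀ i, r i < N := by
    intro i
    have hsub : (univ.filter fun j => v j < v i) ⊆ univ.erase i := by
      intro j hj
      simp only [mem_filter, mem_univ, true_and] at hj
      exact Finset.mem_erase.2 ⟨fun h => absurd (h ▸ hj) (lt_irrefl _), Finset.mem_univ j⟩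
    calc r i ≤ (univ.erase i).card := Finset.card_le_card hsub
      _ < N := by
          rw [Finset.card_erase_of_mem (Finset.mem_univ i), Finset.card_univ, Fintype.card_fin]
          have : 0 < N := Fin.pos i
          omega
  have hmono : ∀ i i', v i < v i' → r i < r i' := by
    intro i i' h
    apply Finset.card_lt_card
    rw [Finset.ssubset_iff_of_subset]
    · exact ⟨i, by simp [h], by simp⟩
    · intro j hj
      simp only [mem_filter, mem_univ, true_and] at hj ⊢
      exact hj.trans h
  have hinj : Function.Injective (fun i => (⟨r i, hrlt i⟩ : Fin N)) := by
    intro i i' h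
    simp only [Fin.mk.injEq] at h
    rcases lt_trichotomy (v i) (v i') with hlt | heq | hgt
    · exact absurd h (hmono _ _ hlt).ne
    · exact hv heq
    · exact absurd h.symm (hmono _ _ hgt).ne
  let e := Equiv.ofBijective _ ((Finite.injective_iff_bijective).1 hinj)
  have he : ∀ i, (e i : ℕ) = r i := fun i => rfl
  calc (univ.filter fun i => r i < k).card
      = (univ.filter fun i => ((e i : Fin N) : ℕ) < k).card := by
        apply Finset.card_bij (fun a _ => a) <;> simp [he]
    _ = (univ.filter fun m : Fin N => (m : ℕ) < k).card := aux_card_filter_comp e (fun m : Fin N => (m : ℕ) < k)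
    _ = k := aux_card_filter_lt N k hk

lemma aux_castSucc_card {n : ℕ} (p : Fin (n+1) → Prop) [DecidablePred p] (hlast : ¬ p (Fin.last n)) :
    (univ.filter p).card = (univ.filter fun i : Fin n => p i.castSucc).card := by
  rw [Finset.card_filter, Finset.card_filter, Fin.sum_univ_castSucc]
  simp [hlast]

lemma aux_order_stat_iff {n k : ℕ} (hn : 1 ≤ n) (hk1 : 1 ≤ k) (hkn : k ≤ n) (v : Fin (n+1) → ℝ) :
    v (Fin.last n) ≤ sInf {q : ℝ | k ≤ (univ.filter fun i : Fin n => v i.castSucc ≤ q).card}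
      ↔ (univ.filter fun j : Fin (n+1) => v j < v (Fin.last n)).card < k := by
  set x := v (Fin.last n) with hx
  set S : Set ℝ := {q : ℝ | k ≤ (univ.filter fun i : Fin n => v i.castSucc ≤ q).card} with hS
  haveI : Nonempty (Fin n) := ⟨⟨0, hn⟩⟩
  obtain ⟨iM, -, hM⟩ := Finset.exists_max_image (univ : Finset (Fin n))
    (fun i => v i.castSucc) Finset.univ_nonempty
  obtain ⟨im, -, hm⟩ := Finset.exists_min_image (univ : Finset (Fin n))
    (fun i => v i.castSucc) Finset.univ_nonempty
  -- S is nonempty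
  have hSne : S.Nonempty := by
    refine ⟨v iM.castSucc, ?_⟩
    show k ≤ (univ.filter fun i : Fin n => v i.castSucc ≤ v iM.castSucc).card
    have heq : (univ.filter fun i : Fin n => v i.castSucc ≤ v iM.castSucc) = univ :=
      Finset.filter_true_of_mem (fun i _ => hM i (Finset.mem_univ i))
    rw [heq, Finset.card_univ, Fintype.card_fin]
    exact hkn
  -- S is bounded below
  have hSbdd : BddBelow S := by
    refine ⟨v im.castSucc, ?_⟩
    intro q hq
    have hpos : 0 < (univ.filter fun i : Fin n => v i.castSucc ≤ q).card := lt_of_lt_of_le hk1 hq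
    obtain ⟨i, hi⟩ := Finset.card_pos.1 hpos
    simp only [mem_filter, mem_univ, true_and] at hi
    exact le_trans (hm i (Finset.mem_univ i)) hi
  have hcount : (univ.filter fun j : Fin (n+1) => v j < x).card
      = (univ.filter fun i : Fin n => v i.castSucc < x).card :=
    aux_castSucc_card (fun j : Fin (n+1) => v j < x) (lt_irrefl x)
  rw [hcount]
  constructor
  · intro hle
    by_contra hcon
    push_neg at hcon
    set T := univ.filter fun i : Fin n => v i.castSucc < x with hT
    have hTne : T.Nonempty := Finset.card_pos.1 (lt_of_lt_of_le hk1 hcon)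
    obtain ⟨iq, hiqT, hiq⟩ := Finset.exists_max_image T (fun i => v i.castSucc) hTne
    have hqx : v iq.castSucc < x := (Finset.mem_filter.1 hiqT).2
    have hqS : v iq.castSucc ∈ S := by
      have hsub : T ⊆ univ.filter fun i : Fin n => v i.castSucc ≤ v iq.castSucc := by
        intro i hi
        simp only [mem_filter, mem_univ, true_and]
        exact hiq i hi
      exact le_trans hcon (Finset.card_le_card hsub)
    have : sInf S ≤ v iq.castSucc := csInf_le hSbdd hqS
    linarith
  · intro hcon
    apply le_csInf hSne
    intro q hq
    by_contra hqx
    push_neg at hqx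
    have hsub : (univ.filter fun i : Fin n => v i.castSucc ≤ q)
        ⊆ univ.filter fun i : Fin n => v i.castSucc < x := by
      intro i hi
      simp only [mem_filter, mem_univ, true_and] at hi ⊢
      exact lt_of_le_of_lt hi hqx
    have := le_trans hq (Finset.card_le_card hsub)
    omega

open MeasureTheory ProbabilityTheory
open scoped ENNReal


/-- For exchangeable, almost surely pairwise distinct real random variables
`s_1, …, s_{n+1}` and any `1 ≤ k ≤ n`, letting `s_(k)` denote the `k`-th smallest among
`s_1, …, s_n` (equivalently `s_(k) ω = inf {q : #{i ≤ n : s_i ω ≤ q} ≥ k}`), one has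
`P(s_{n+1} ≤ s_(k)) = k/(n+1)`. -/
theorem exchangeable_order_statistic_prob
    {Ω : Type*} [MeasurableSpace Ω] (P : Measure Ω) [IsProbabilityMeasure P]
    (n : ℕ) (hn : 1 ≤ n)
    (s : Fin (n + 1) → Ω → ℝ)
    (hmeas : ∀ i, Measurable (s i))
    (hexch : ∀ σ : Equiv.Perm (Fin (n + 1)),
      Measure.map (fun ω => fun i => s (σ i) ω) P
        = Measure.map (fun ω => fun i => s i ω) P)
    (hdistinct : ∀ i j, i ≠ j → P {ω | s i ω = s j ω} = 0)
    (k : ℕ) (hk1 : 1 ≤ k) (hkn : k ≤ n)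
    (sk : Ω → ℝ)
    (hsk : ∀ ω, sk ω =
      sInf {q : ℝ | k ≤ (Finset.univ.filter
        (fun i : Fin n => s i.castSucc ω ≤ q)).card}) :
    (P {ω | s (Fin.last n) ω ≤ sk ω}).toReal = (k : ℝ) / ((n : ℝ) + 1) := by
  classical
  -- the rank events
  set A : Fin (n + 1) → Set Ω :=
    fun i => {ω | (univ.filter fun j => s j ω < s i ω).card < k} with hA
  have hAm : ∀ i, MeasurableSet (A i) := by
    intro i
    have hcard : Measurable fun ω => (univ.filter fun j => s j ω < s i ω).card := by
      simp only [Finset.card_filter]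
      exact Finset.measurable_sum _ fun j _ =>
        Measurable.ite (measurableSet_lt (hmeas j) (hmeas i)) measurable_const measurable_const
    have htriv : MeasurableSet {m : ℕ | m < k} := trivial
    exact hcard htriv
  -- exchangeability: all A i have the same probability
  have hmap : ∀ i, P (A i) = P (A (Fin.last n)) := by
    intro i
    set σ := Equiv.swap i (Fin.last n) with hσ
    set B : Set (Fin (n + 1) → ℝ) :=
      {f | (univ.filter fun j => f j < f (Fin.last n)).card < k} with hB
    have hBm : MeasurableSet B := by
      have hcard : Measurable fun f : Fin (n + 1) → ℝ =>
          (univ.filter fun j => f j < f (Fin.last n)).card := by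
        simp only [Finset.card_filter]
        exact Finset.measurable_sum _ fun j _ =>
          Measurable.ite (measurableSet_lt (measurable_pi_apply j)
            (measurable_pi_apply (Fin.last n))) measurable_const measurable_const
      have htriv : MeasurableSet {m : ℕ | m < k} := trivial
      exact hcard htriv
    have hs : Measurable fun ω => fun j => s j ω := measurable_pi_lambda _ hmeas
    have hsσ : Measurable fun ω => fun j => s (σ j) ω := measurable_pi_lambda _ fun j => hmeas _
    have h1 : (fun ω => fun j => s j ω) ⁻¹' B = A (Fin.last n) := rfl
    have h2 : (fun ω => fun j => s (σ j) ω) ⁻¹' B = A i := by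
      ext ω
      simp only [Set.mem_preimage, hB, hA, Set.mem_setOf_eq]
      have hlast : σ (Fin.last n) = i := Equiv.swap_apply_right i (Fin.last n)
      simp only [hlast]
      rw [aux_card_filter_comp σ (fun j => s j ω < s i ω)]
    calc P (A i) = Measure.map (fun ω => fun j => s (σ j) ω) P B := by
          rw [Measure.map_apply hsσ hBm, h2]
      _ = Measure.map (fun ω => fun j => s j ω) P B := by rw [hexch σ]
      _ = P (A (Fin.last n)) := by rw [Measure.map_apply hs hBm, h1]
  -- a.s. pairwise distinct
  have hD : ∀ᵐ ω ∂P, ∀ i j : Fin (n + 1), i ≠ j → s i ω ≠ s j ω := by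
    rw [ae_all_iff]
    intro i
    rw [ae_all_iff]
    intro j
    by_cases hij : i = j
    · exact Filter.Eventually.of_forall fun ω h => absurd hij h
    · have h0 : P {ω | s i ω = s j ω} = 0 := hdistinct i j hij
      have : ∀ᵐ ω ∂P, s i ω ≠ s j ω := by
        rw [ae_iff]
        convert h0 using 2
        ext ω
        simp
      filter_upwards [this] with ω hω _
      exact hω
  -- a.e., exactly k of the events A i occur
  have hcount : ∀ᵐ ω ∂P, (univ.filter fun i => ω ∈ A i).card = k := by
    filter_upwards [hD] with ω hω
    have hv : Function.Injective fun i => s i ω := by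
      intro i j h
      by_contra hne
      exact hω i j hne h
    have := aux_rank_count (fun i => s i ω) hv k (by omega)
    simpa [hA] using this
  -- sum of probabilities equals k
  have hsum : ∑ i : Fin (n + 1), P (A i) = (k : ℝ≥0∞) := by
    have h1 : ∀ i : Fin (n + 1), P (A i) = ∫⁻ ω, (A i).indicator (fun _ => (1 : ℝ≥0∞)) ω ∂P :=
      fun i => (lintegral_indicator_one (hAm i)).symm
    calc ∑ i : Fin (n + 1), P (A i)
        = ∑ i : Fin (n + 1), ∫⁻ ω, (A i).indicator (fun _ => (1 : ℝ≥0∞)) ω ∂P := by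
          exact Finset.sum_congr rfl fun i _ => h1 i
      _ = ∫⁻ ω, ∑ i : Fin (n + 1), (A i).indicator (fun _ => (1 : ℝ≥0∞)) ω ∂P :=
          (lintegral_finset_sum _ fun i _ => (measurable_const.indicator (hAm i))).symm
      _ = ∫⁻ _, (k : ℝ≥0∞) ∂P := by
          apply lintegral_congr_ae
          filter_upwards [hcount] with ω hω
          have : ∑ i : Fin (n + 1), (A i).indicator (fun _ => (1 : ℝ≥0∞)) ω
              = ((univ.filter fun i => ω ∈ A i).card : ℝ≥0∞) := by
            rw [Finset.card_filter]
            push_cast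
            refine Finset.sum_congr rfl fun i _ => ?_
            by_cases h : ω ∈ A i <;> simp [Set.indicator_apply, h]
          rw [this, hω]
      _ = (k : ℝ≥0∞) := by simp
  -- conclude the probability of A last
  have hlast : P (A (Fin.last n)) = (k : ℝ≥0∞) / ((n : ℝ≥0∞) + 1) := by
    have h1 : ∑ i : Fin (n + 1), P (A i) = ((n : ℝ≥0∞) + 1) * P (A (Fin.last n)) := by
      rw [Finset.sum_congr rfl fun i _ => hmap i, Finset.sum_const, Finset.card_univ,
        Fintype.card_fin, nsmul_eq_mul]
      push_cast
      ring
    rw [h1] at hsum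
    rw [ENNReal.eq_div_iff]
    · exact hsum
    · intro h
      simp at h
    · exact ENNReal.add_ne_top.2 ⟨ENNReal.natCast_ne_top n, ENNReal.one_ne_top⟩
  -- the event in question equals A last
  have hset : {ω | s (Fin.last n) ω ≤ sk ω} = A (Fin.last n) := by
    ext ω
    simp only [Set.mem_setOf_eq, hA]
    rw [hsk ω]
    exact aux_order_stat_iff hn hk1 hkn (fun i => s i ω)
  rw [hset, hlast, ENNReal.toReal_div,
    ENNReal.toReal_add (ENNReal.natCast_ne_top n) ENNReal.one_ne_top]
  simp
end

section
/- Let n ≥ 1 and let s_1, …, s_{n+1} be exchangeable real-valued random variables that are almost surely pairwise distinct. Then the rank of s_{n+1} among s_1, …, s_{n+1}, defined as #{i ∈ {1,…,n+1} : s_i ≤ s_{n+1}}, is uniformly distributed on {1, 2, …, n+1}. -/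
open MeasureTheory ProbabilityTheory
open scoped ENNReal

private noncomputable def rk {m : ℕ} (x : Fin m → ℝ) (j : Fin m) : ℕ :=
  (Finset.univ.filter (fun i => x i ≤ x j)).card

private lemma rk_inj {m : ℕ} {x : Fin m → ℝ} (hx : Function.Injective x) :
    Function.Injective (rk x) := by
  intro j k h
  by_contra hjk
  wlog hlt : x j < x k generalizing j k
  · exact this h.symm (Ne.symm hjk)
      (lt_of_le_of_ne (not_lt.1 hlt) fun e => hjk (hx e.symm))
  have hsub : (Finset.univ.filter (fun i => x i ≤ x j))
      ⊂ (Finset.univ.filter (fun i => x i ≤ x k)) := by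
    constructor
    · intro i hi
      simp only [Finset.mem_filter, Finset.mem_univ, true_and] at *
      exact hi.trans hlt.le
    · intro hcon
      have := hcon (Finset.mem_filter.2 ⟨Finset.mem_univ k, le_refl _⟩)
      simp only [Finset.mem_filter, Finset.mem_univ, true_and] at this
      exact absurd this (not_le.2 hlt)
  exact absurd h (Finset.card_lt_card hsub).ne

private lemma rk_mem_Icc {m : ℕ} (x : Fin m → ℝ) (j : Fin m) :
    rk x j ∈ Finset.Icc 1 m := by
  refine Finset.mem_Icc.2 ⟨?_, ?_⟩
  · exact Finset.card_pos.2 ⟨j, Finset.mem_filter.2 ⟨Finset.mem_univ j, le_refl _⟩⟩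
  · simpa [rk] using (Finset.card_filter_le Finset.univ (fun i => x i ≤ x j))

private lemma rk_existsUnique {m : ℕ} {x : Fin m → ℝ} (hx : Function.Injective x)
    {r : ℕ} (h1 : 1 ≤ r) (h2 : r ≤ m) : ∃! j, rk x j = r := by
  have himg : Finset.univ.image (rk x) = Finset.Icc 1 m := by
    apply Finset.eq_of_subset_of_card_le
    · intro a ha
      obtain ⟨j, _, rfl⟩ := Finset.mem_image.1 ha
      exact rk_mem_Icc x j
    · rw [Finset.card_image_of_injective _ (rk_inj hx)]
      simp [Nat.card_Icc]
  have hr : r ∈ Finset.univ.image (rk x) := by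
    rw [himg]; exact Finset.mem_Icc.2 ⟨h1, h2⟩
  obtain ⟨j, _, hj⟩ := Finset.mem_image.1 hr
  exact ⟨j, hj, fun k hk => rk_inj hx (hk.trans hj.symm)⟩

private lemma rk_measurable {m : ℕ} (j : Fin m) :
    Measurable fun x : Fin m → ℝ => rk x j := by
  unfold rk
  simp_rw [Finset.card_filter]
  exact Finset.measurable_sum _ fun i _ =>
    Measurable.ite (measurableSet_le (measurable_pi_apply i) (measurable_pi_apply j))
      measurable_const measurable_const

private lemma rk_comp {m : ℕ} (x : Fin m → ℝ) (σ : Equiv.Perm (Fin m)) (j : Fin m) :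
    rk (x ∘ σ) j = rk x (σ j) := by
  unfold rk
  apply Finset.card_equiv σ
  intro i
  simp

/-- For exchangeable, almost surely pairwise distinct real random variables
`s_1, …, s_{n+1}`, the rank of `s_{n+1}` among `s_1, …, s_{n+1}`, defined as
`#{i ∈ {1,…,n+1} : s_i ≤ s_{n+1}}`, is uniformly distributed on `{1, …, n+1}`:
each value `r` with `1 ≤ r ≤ n+1` is attained with probability `1/(n+1)`. -/
theorem exchangeable_rank_uniform
    {Ω : Type*} [MeasurableSpace Ω] (P : Measure Ω) [IsProbabilityMeasure P]
    (n : ℕ) (hn : 1 ≤ n)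
    (s : Fin (n + 1) → Ω → ℝ)
    (hmeas : ∀ i, Measurable (s i))
    (hexch : ∀ σ : Equiv.Perm (Fin (n + 1)),
      Measure.map (fun ω => fun i => s (σ i) ω) P
        = Measure.map (fun ω => fun i => s i ω) P)
    (hdistinct : ∀ i j, i ≠ j → P {ω | s i ω = s j ω} = 0)
    (rank : Ω → ℕ)
    (hrank : ∀ ω, rank ω = (Finset.univ.filter
      (fun i : Fin (n + 1) => s i ω ≤ s (Fin.last n) ω)).card) :
    ∀ r : ℕ, 1 ≤ r → r ≤ n + 1 →
      (P {ω | rank ω = r}).toReal = 1 / ((n : ℝ) + 1) := by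
  intro r hr1 hr2
  set f : Ω → Fin (n + 1) → ℝ := fun ω i => s i ω with hf_def
  have hf : Measurable f := measurable_pi_lambda _ hmeas
  set E : Fin (n + 1) → Set Ω := fun j => {ω | rk (f ω) j = r} with hE_def
  have hEmeas : ∀ j, MeasurableSet (E j) := by
    intro j
    exact ((rk_measurable j).comp hf) (measurableSet_singleton r)
  -- all E j have the same probability
  have hEeq : ∀ j, P (E j) = P (E (Fin.last n)) := by
    intro j
    set σ : Equiv.Perm (Fin (n + 1)) := Equiv.swap j (Fin.last n) with hσ_def
    have hg : Measurable (fun ω => fun i => s (σ i) ω) :=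
      measurable_pi_lambda _ fun i => hmeas _
    have hA : MeasurableSet {x : Fin (n + 1) → ℝ | rk x (Fin.last n) = r} :=
      (rk_measurable (Fin.last n)) (measurableSet_singleton r)
    have key : P ((fun ω => fun i => s (σ i) ω) ⁻¹' {x | rk x (Fin.last n) = r})
        = P (f ⁻¹' {x | rk x (Fin.last n) = r}) := by
      rw [← Measure.map_apply hg hA, ← Measure.map_apply hf hA, hexch σ]
    have h1 : (fun ω => fun i => s (σ i) ω) ⁻¹' {x | rk x (Fin.last n) = r} = E j := by
      ext ω
      have : (fun i => s (σ i) ω) = f ω ∘ σ := rfl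
      simp only [Set.mem_preimage, Set.mem_setOf_eq, hE_def, this, rk_comp]
      simp only [hσ_def, Equiv.swap_apply_right]
    have h2 : f ⁻¹' {x | rk x (Fin.last n) = r} = E (Fin.last n) := rfl
    rw [h1, h2] at key
    exact key
  -- the a.s. set of distinctness
  set D : Set Ω := {ω | ∀ i j : Fin (n + 1), i ≠ j → s i ω ≠ s j ω} with hD_def
  have hDmeas : MeasurableSet D := by
    have : D = ⋂ i, ⋂ j, {ω | i ≠ j → s i ω ≠ s j ω} := by
      ext ω; simp [hD_def]
    rw [this]
    refine MeasurableSet.iInter fun i => MeasurableSet.iInter fun j => ?_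
    by_cases h : i = j
    · subst h; simp
    · have : {ω | i ≠ j → s i ω ≠ s j ω} = {ω | s i ω = s j ω}ᶜ := by
        ext ω; simp [h]
      rw [this]
      exact (measurableSet_eq_fun (hmeas i) (hmeas j)).compl
  have hD1 : P D = 1 := by
    rw [← prob_compl_eq_zero_iff hDmeas]
    have hsub : Dᶜ ⊆ ⋃ i, ⋃ j, {ω | i ≠ j ∧ s i ω = s j ω} := by
      intro ω hω
      simp only [hD_def, Set.mem_compl_iff, Set.mem_setOf_eq, not_forall] at hω
      obtain ⟨i, j, hij, heq⟩ := hω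
      simp only [Set.mem_iUnion, Set.mem_setOf_eq]
      exact ⟨i, j, hij, not_not.1 heq⟩
    refine measure_mono_null hsub ?_
    refine measure_iUnion_null fun i => measure_iUnion_null fun j => ?_
    by_cases h : i = j
    · subst h
      have : {ω | i ≠ i ∧ s i ω = s i ω} = ∅ := by ext ω; simp
      simp [this]
    · exact measure_mono_null (fun ω hω => hω.2) (hdistinct i j h)
  have hDinj : ∀ ω ∈ D, Function.Injective (f ω) := by
    intro ω hω i j hij
    by_contra hne
    exact hω i j hne hij
  -- F j partition D
  set F : Fin (n + 1) → Set Ω := fun j => E j ∩ D with hF_def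
  have hFmeas : ∀ j, MeasurableSet (F j) := fun j => (hEmeas j).inter hDmeas
  have hFdisj : Pairwise (Function.onFun Disjoint F) := by
    intro j k hjk
    simp only [Function.onFun]
    rw [Set.disjoint_left]
    rintro ω ⟨hEj, hDω⟩ ⟨hEk, _⟩
    exact hjk (rk_inj (hDinj ω hDω) (hEj.trans hEk.symm))
  have hFunion : (⋃ j, F j) = D := by
    apply Set.Subset.antisymm
    · exact Set.iUnion_subset fun j => Set.inter_subset_right
    · intro ω hω
      obtain ⟨j, hj, -⟩ := rk_existsUnique (hDinj ω hω) hr1 hr2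
      exact Set.mem_iUnion.2 ⟨j, hj, hω⟩
  have hFeqE : ∀ j, P (F j) = P (E j) := by
    intro j
    rw [hF_def]
    exact measure_inter_conull (by rwa [← prob_compl_eq_zero_iff hDmeas] at hD1)
  have hsum : (∑ j : Fin (n + 1), P (E (Fin.last n))) = 1 := by
    calc (∑ j : Fin (n + 1), P (E (Fin.last n)))
        = ∑ j : Fin (n + 1), P (F j) := by
          refine Finset.sum_congr rfl fun j _ => ?_
          rw [hFeqE j, hEeq j]
      _ = P (⋃ j, F j) := by
          rw [measure_iUnion hFdisj hFmeas, tsum_fintype]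
      _ = 1 := by rw [hFunion, hD1]
  have hcard : (∑ j : Fin (n + 1), P (E (Fin.last n)))
      = (n + 1 : ℕ) * P (E (Fin.last n)) := by
    rw [Finset.sum_const, Finset.card_univ, Fintype.card_fin, nsmul_eq_mul]
  have hp : P (E (Fin.last n)) = (((n : ℝ≥0∞) + 1))⁻¹ := by
    have hmul : P (E (Fin.last n)) * ((n : ℝ≥0∞) + 1) = 1 := by
      calc P (E (Fin.last n)) * ((n : ℝ≥0∞) + 1)
          = ((n + 1 : ℕ) : ℝ≥0∞) * P (E (Fin.last n)) := by push_cast; ring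
        _ = ∑ j : Fin (n + 1), P (E (Fin.last n)) := hcard.symm
        _ = 1 := hsum
    exact ENNReal.eq_inv_of_mul_eq_one_left hmul
  have hset : {ω | rank ω = r} = E (Fin.last n) := by
    ext ω
    simp only [Set.mem_setOf_eq, hE_def, hrank ω]
    rfl
  rw [hset, hp, ENNReal.toReal_inv, one_div]
  have : ((n : ℝ≥0∞) + 1) = ((n + 1 : ℕ) : ℝ≥0∞) := by push_cast; ring
  rw [this]
  simp [ENNReal.toReal_add]
end

section
/- (Conformal coverage under exchangeability.) Let 𝒳 and 𝒴 be measurable spaces, let s : 𝒳 × 𝒴 → ℝ be a measurable score function, let n ≥ 1, and let α ∈ (0,1) satisfy α ≥ 1/(n+1). Suppose (X_1,Y_1), …, (X_{n+1},Y_{n+1}) are exchangeable random pairs taking values in 𝒳 × 𝒴. Define s_i = s(X_i,Y_i) for i = 1,…,n, let q̂ be the k-th smallest value among s_1,…,s_n where k = ⌈(n+1)(1−α)⌉, and define 𝒯(x) = {y ∈ 𝒴 : s(x,y) ≤ q̂}. Then P(Y_{n+1} ∈ 𝒯(X_{n+1})) ≥ 1 − α. -/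
open MeasureTheory ProbabilityTheory
open scoped ENNReal

section AuxConformal
open Finset
lemma aux_quantile {m k : ℕ} (hk1 : 1 ≤ k) (hkm : k ≤ m) (s : Fin m → ℝ) (t : ℝ) :
    t ≤ sInf {q : ℝ | k ≤ (univ.filter (fun j => s j ≤ q)).card} ↔
      (univ.filter (fun j => s j < t)).card < k := by
  have hm : 0 < m := hk1.trans hkm
  haveI : Nonempty (Fin m) := ⟨⟨0, hm⟩⟩
  set Q := {q : ℝ | k ≤ (univ.filter (fun j => s j ≤ q)).card} with hQ
  have hMQ : (univ.sup' univ_nonempty s) ∈ Q := by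
    have : univ.filter (fun j => s j ≤ univ.sup' univ_nonempty s) = univ := by
      apply filter_true_of_mem
      intro j _
      exact le_sup' s (mem_univ j)
    simp only [hQ, Set.mem_setOf_eq, this, card_univ, Fintype.card_fin]
    exact hkm
  have hQne : Q.Nonempty := ⟨_, hMQ⟩
  constructor
  · intro h
    by_contra hc
    push_neg at hc
    have hFne : (univ.filter (fun j => s j < t)).Nonempty := by
      rw [← card_pos]; omega
    set q0 := (univ.filter (fun j => s j < t)).sup' hFne s with hq0
    have hq0t : q0 < t := by
      rw [hq0, Finset.sup'_lt_iff]
      intro j hj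
      exact (mem_filter.mp hj).2
    have hq0Q : q0 ∈ Q := by
      refine le_trans hc (card_le_card ?_)
      intro j hj
      simp only [mem_filter, mem_univ, true_and] at hj ⊢
      exact le_sup' s (mem_filter.mpr ⟨mem_univ j, hj⟩)
    have : sInf Q ≤ q0 := csInf_le ⟨univ.inf' univ_nonempty s, fun q hq => by
      have hq' : k ≤ (univ.filter (fun j => s j ≤ q)).card := hq
      have hne : (univ.filter (fun j => s j ≤ q)).Nonempty := by
        rw [← card_pos]; omega
      obtain ⟨j, hj⟩ := hne
      simp only [mem_filter, mem_univ, true_and] at hj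
      exact le_trans (inf'_le s (mem_univ j)) hj⟩ hq0Q
    linarith
  · intro h
    apply le_csInf hQne
    intro q hq
    by_contra hlt
    push_neg at hlt
    have : (univ.filter (fun j => s j ≤ q)).card ≤ (univ.filter (fun j => s j < t)).card := by
      apply card_le_card
      intro j hj
      simp only [mem_filter, mem_univ, true_and] at hj ⊢
      exact lt_of_le_of_lt hj hlt
    have hq' : k ≤ (univ.filter (fun j => s j ≤ q)).card := hq
    omega
lemma aux_comb {m k : ℕ} (hkm : k ≤ m) (S : Fin m → ℝ) :
    k ≤ (univ.filter (fun i => (univ.filter (fun j => S j < S i)).card < k)).card := by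
  set A : Fin m → Finset (Fin m) :=
    fun i => univ.filter (fun j => S j < S i ∨ (S j = S i ∧ j < i)) with hA
  set r : Fin m → ℕ := fun i => (A i).card with hr
  have hnotmem : ∀ i, i ∉ A i := by
    intro i
    simp [hA]
  have hlt : ∀ i j : Fin m, (S i < S j ∨ (S i = S j ∧ i < j)) → r i < r j := by
    intro i j hij
    apply card_lt_card
    constructor
    · intro t ht
      simp only [hA, mem_filter, mem_univ, true_and] at ht ⊢
      rcases ht with h1 | ⟨h2, h3⟩
      · rcases hij with h4 | ⟨h4, h5⟩
        · exact Or.inl (h1.trans h4)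
        · exact Or.inl (h4 ▸ h1)
      · rcases hij with h4 | ⟨h4, h5⟩
        · exact Or.inl (h2 ▸ h4)
        · exact Or.inr ⟨h2.trans h4, h3.trans h5⟩
    · intro hsub
      have : i ∈ A j := by
        simp only [hA, mem_filter, mem_univ, true_and]
        exact hij
      exact hnotmem i (hsub this)
  have hrlt : ∀ i, r i < m := by
    intro i
    have : A i ⊆ univ.erase i := by
      intro t ht
      exact mem_erase.mpr ⟨fun h => hnotmem i (h ▸ ht), mem_univ t⟩
    have hm : 0 < m := i.pos
    calc r i ≤ (univ.erase i).card := card_le_card this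
      _ < m := by rw [card_erase_of_mem (mem_univ i), card_univ, Fintype.card_fin]; omega
  set r' : Fin m → Fin m := fun i => ⟨r i, hrlt i⟩ with hr'
  have hinj : Function.Injective r' := by
    intro i j hij
    by_contra hne
    rcases lt_trichotomy (S i) (S j) with h | h | h
    · exact absurd (Fin.val_eq_of_eq hij) (Nat.ne_of_lt (hlt i j (Or.inl h)))
    · rcases lt_or_gt_of_ne (fun h' : i = j => hne h') with h2 | h2
      · exact absurd (Fin.val_eq_of_eq hij) (Nat.ne_of_lt (hlt i j (Or.inr ⟨h, h2⟩)))
      · exact absurd (Fin.val_eq_of_eq hij).symm (Nat.ne_of_lt (hlt j i (Or.inr ⟨h.symm, h2⟩)))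
    · exact absurd (Fin.val_eq_of_eq hij).symm (Nat.ne_of_lt (hlt j i (Or.inl h)))
  -- the set {i | r i < k} has card exactly k
  have himg : (univ.filter (fun i => (r' i : ℕ) < k)).image r'
      = univ.filter (fun v : Fin m => (v : ℕ) < k) := by
    ext v
    simp only [mem_image, mem_filter, mem_univ, true_and]
    constructor
    · rintro ⟨i, hi, rfl⟩; exact hi
    · intro hv
      obtain ⟨i, rfl⟩ := Finite.surjective_of_injective hinj v
      exact ⟨i, hv, rfl⟩
  have hcard : (univ.filter (fun i => (r' i : ℕ) < k)).card
      = (univ.filter (fun v : Fin m => (v : ℕ) < k)).card := by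
    rw [← himg, card_image_of_injective _ hinj]
  have hcard2 : (univ.filter (fun v : Fin m => (v : ℕ) < k)).card = k := by
    have heq : univ.filter (fun v : Fin m => (v : ℕ) < k)
        = (Finset.range k).attachFin (fun a ha => lt_of_lt_of_le (Finset.mem_range.mp ha) hkm) := by
      ext v
      simp [Finset.mem_attachFin]
    rw [heq, Finset.card_attachFin, Finset.card_range]
  refine le_trans (le_of_eq (hcard2.symm.trans hcard.symm)) (card_le_card ?_)
  intro i hi
  simp only [mem_filter, mem_univ, true_and, hr'] at hi ⊢
  refine lt_of_le_of_lt (card_le_card (fun j hj => ?_)) hi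
  simp only [hA, mem_filter, mem_univ, true_and] at hj ⊢
  exact Or.inl hj

open Finset in
lemma aux_castSucc {n : ℕ} (f : Fin (n+1) → ℝ) :
    (univ.filter (fun j : Fin n => f j.castSucc < f (Fin.last n))).card
      = (univ.filter (fun j : Fin (n+1) => f j < f (Fin.last n))).card := by
  apply Finset.card_nbij (fun j => j.castSucc)
  · intro j hj
    simp only [mem_coe, mem_filter, mem_univ, true_and] at hj ⊢
    exact hj
  · intro a _ b _ hab
    exact Fin.castSucc_injective n hab
  · intro j hj
    simp only [Set.mem_image, mem_coe, mem_filter, mem_univ, true_and] at hj ⊢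
    have hjne : j ≠ Fin.last n := by
      rintro rfl
      exact lt_irrefl _ hj
    obtain ⟨i, rfl⟩ := Fin.exists_castSucc_eq.mpr hjne
    exact ⟨i, hj, rfl⟩
end AuxConformal


/-- **Conformal coverage under exchangeability.**
For exchangeable pairs `(X_1,Y_1), …, (X_{n+1},Y_{n+1})`, a measurable score `s`,
`q̂` the `k`-th smallest of the calibration scores `s(X_i,Y_i)`, `i = 1,…,n`, with
`k = ⌈(n+1)(1-α)⌉`, and `𝒯(x) = {y : s(x,y) ≤ q̂}`, we have
`P(Y_{n+1} ∈ 𝒯(X_{n+1})) ≥ 1 - α`. -/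
theorem conformal_coverage_exchangeable
    {Ω 𝒳 𝒴 : Type*} [MeasurableSpace Ω] [MeasurableSpace 𝒳] [MeasurableSpace 𝒴]
    (P : Measure Ω) [IsProbabilityMeasure P]
    (score : 𝒳 × 𝒴 → ℝ) (hscore : Measurable score)
    (n : ℕ) (hn : 1 ≤ n)
    (α : ℝ) (hα0 : 0 < α) (hα1 : α < 1) (hαn : 1 / ((n : ℝ) + 1) ≤ α)
    (X : Fin (n + 1) → Ω → 𝒳) (Y : Fin (n + 1) → Ω → 𝒴)
    (hXY : ∀ i, Measurable (fun ω => (X i ω, Y i ω)))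
    (hexch : ∀ σ : Equiv.Perm (Fin (n + 1)),
      Measure.map (fun ω => fun i => (X (σ i) ω, Y (σ i) ω)) P
        = Measure.map (fun ω => fun i => (X i ω, Y i ω)) P)
    (k : ℕ) (hk : k = ⌈((n : ℝ) + 1) * (1 - α)⌉₊)
    (qhat : Ω → ℝ)
    (hqhat : ∀ ω, qhat ω =
      sInf {q : ℝ | k ≤ (Finset.univ.filter
        (fun i : Fin n => score (X i.castSucc ω, Y i.castSucc ω) ≤ q)).card})
    (T : Ω → 𝒳 → Set 𝒴)
    (hT : ∀ ω x, T ω x = {y : 𝒴 | score (x, y) ≤ qhat ω}) :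
    (1 : ℝ) - α ≤ (P {ω | Y (Fin.last n) ω ∈ T ω (X (Fin.last n) ω)}).toReal := by
  classical
  have hnpos : (0:ℝ) < (n:ℝ) + 1 := by positivity
  have hk1 : 1 ≤ k := by
    rw [hk, Nat.one_le_ceil_iff]
    have : (0:ℝ) < 1 - α := by linarith
    positivity
  have hkn : k ≤ n := by
    rw [hk, Nat.ceil_le]
    rw [div_le_iff₀ hnpos] at hαn
    nlinarith
  have hkreal : ((n:ℝ)+1) * (1-α) ≤ k := hk ▸ Nat.le_ceil _
  set pair : Ω → (Fin (n+1) → 𝒳 × 𝒴) := fun ω i => (X i ω, Y i ω) with hpairdef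
  have hpair : Measurable pair := measurable_pi_lambda _ hXY
  set μ := Measure.map pair P with hμ
  have hμprob : IsProbabilityMeasure μ := Measure.isProbabilityMeasure_map hpair.aemeasurable
  set B : Fin (n+1) → Set (Fin (n+1) → 𝒳 × 𝒴) := fun i =>
    {z | (Finset.univ.filter (fun j => score (z j) < score (z i))).card < k} with hB
  have hcnt : ∀ i, Measurable (fun z : Fin (n+1) → 𝒳 × 𝒴 =>
      (Finset.univ.filter (fun j => score (z j) < score (z i))).card) := by
    intro i
    simp_rw [Finset.card_filter]
    apply Finset.measurable_sum
    intro j _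
    exact Measurable.ite
      (measurableSet_lt (hscore.comp (measurable_pi_apply j))
        (hscore.comp (measurable_pi_apply i))) measurable_const measurable_const
  have hBmeas : ∀ i, MeasurableSet (B i) := by
    intro i
    exact (hcnt i) (MeasurableSet.of_discrete (s := Set.Iio k))
  -- all B i have the same measure under μ by exchangeability
  have hμB : ∀ i, μ (B i) = μ (B (Fin.last n)) := by
    intro i
    set σ := Equiv.swap i (Fin.last n) with hσ
    set reindex : (Fin (n+1) → 𝒳 × 𝒴) → (Fin (n+1) → 𝒳 × 𝒴) :=
      fun z => fun j => z (σ j) with hreindexdef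
    have hreindex : Measurable reindex :=
      measurable_pi_lambda _ (fun j => measurable_pi_apply (σ j))
    have h1 : Measure.map reindex μ = μ := by
      rw [hμ, Measure.map_map hreindex hpair]
      exact hexch σ
    have hpre : reindex ⁻¹' (B (Fin.last n)) = B i := by
      ext z
      simp only [hB, hreindexdef, Set.mem_preimage, Set.mem_setOf_eq]
      have hσlast : σ (Fin.last n) = i := Equiv.swap_apply_right i (Fin.last n)
      simp only [hσlast]
      have hcard : (Finset.univ.filter (fun j => score (z (σ j)) < score (z i))).card
          = (Finset.univ.filter (fun j => score (z j) < score (z i))).card := by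
        apply Finset.card_equiv σ
        intro j
        simp
      rw [hcard]
    rw [← hpre, ← Measure.map_apply hreindex (hBmeas (Fin.last n)), h1]
  -- sum bound via integration
  have hsum : (k : ℝ≥0∞) ≤ ∑ i : Fin (n+1), μ (B i) := by
    have hpt : ∀ z, (k : ℝ≥0∞) ≤ ∑ i : Fin (n+1),
        (B i).indicator (fun _ => (1:ℝ≥0∞)) z := by
      intro z
      have hcomb := aux_comb (le_trans hkn (Nat.le_succ n)) (fun i : Fin (n+1) => score (z i))
      calc (k:ℝ≥0∞) ≤ ((Finset.univ.filter (fun i : Fin (n+1) =>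
            (Finset.univ.filter (fun j => score (z j) < score (z i))).card < k)).card : ℝ≥0∞) := by
            exact_mod_cast hcomb
        _ = ∑ i : Fin (n+1), (B i).indicator (fun _ => (1:ℝ≥0∞)) z := by
            rw [Finset.card_filter, Nat.cast_sum]
            refine Finset.sum_congr rfl (fun i _ => ?_)
            simp only [Set.indicator_apply, hB, Set.mem_setOf_eq,
              apply_ite (Nat.cast : ℕ → ℝ≥0∞), Nat.cast_one, Nat.cast_zero]
    calc (k:ℝ≥0∞) = ∫⁻ _, (k:ℝ≥0∞) ∂μ := by simp
      _ ≤ ∫⁻ z, ∑ i : Fin (n+1), (B i).indicator (fun _ => (1:ℝ≥0∞)) z ∂μ :=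
          lintegral_mono hpt
      _ = ∑ i : Fin (n+1), ∫⁻ z, (B i).indicator (fun _ => (1:ℝ≥0∞)) z ∂μ :=
          lintegral_finset_sum _ (fun i _ => (measurable_const.indicator (hBmeas i)))
      _ = ∑ i : Fin (n+1), μ (B i) :=
          Finset.sum_congr rfl (fun i _ => lintegral_indicator_one (hBmeas i))
  have hsum' : (k:ℝ≥0∞) ≤ ((n:ℝ≥0∞)+1) * μ (B (Fin.last n)) := by
    calc (k:ℝ≥0∞) ≤ ∑ i : Fin (n+1), μ (B i) := hsum
      _ = ∑ _i : Fin (n+1), μ (B (Fin.last n)) := Finset.sum_congr rfl (fun i _ => hμB i)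
      _ = ((n:ℝ≥0∞)+1) * μ (B (Fin.last n)) := by
          rw [Finset.sum_const, Finset.card_univ, Fintype.card_fin, nsmul_eq_mul]
          push_cast
          ring
  -- identify the coverage event
  have hTset : {ω | Y (Fin.last n) ω ∈ T ω (X (Fin.last n) ω)} = pair ⁻¹' (B (Fin.last n)) := by
    ext ω
    simp only [hT, Set.mem_setOf_eq, Set.mem_preimage, hB]
    rw [hqhat]
    rw [aux_quantile hk1 hkn (fun j : Fin n => score (pair ω j.castSucc))
      (score (X (Fin.last n) ω, Y (Fin.last n) ω))]
    rw [show score (X (Fin.last n) ω, Y (Fin.last n) ω) = score (pair ω (Fin.last n)) from rfl]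
    rw [aux_castSucc (fun j => score (pair ω j))]
  have hPtarget : P {ω | Y (Fin.last n) ω ∈ T ω (X (Fin.last n) ω)} = μ (B (Fin.last n)) := by
    rw [hTset, hμ, Measure.map_apply hpair (hBmeas _)]
  rw [hPtarget]
  have hfin : μ (B (Fin.last n)) ≠ ⊤ := measure_ne_top μ _
  have h2 : (k:ℝ) ≤ ((n:ℝ)+1) * (μ (B (Fin.last n))).toReal := by
    have h3 := ENNReal.toReal_mono (by finiteness) hsum'
    rw [ENNReal.toReal_natCast, ENNReal.toReal_mul] at h3
    convert h3 using 2
    rw [ENNReal.toReal_add (by simp) (by simp), ENNReal.toReal_natCast, ENNReal.toReal_one]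
  have hp0 : (0:ℝ) ≤ (μ (B (Fin.last n))).toReal := ENNReal.toReal_nonneg
  nlinarith
end

section
/- (Validity of UCB calibration, abstract form.) Let λ_min < λ_max be real numbers, set Λ = [λ_min, λ_max], let α ∈ (0,1) and δ ∈ (0,1). Let R : Λ → [0,1] be continuous and nonincreasing with R(λ_max) = 0. Let (Ω, ℱ, P) be a probability space and let R̂⁺ : Ω × Λ → ℝ be such that for each fixed λ ∈ Λ, the map ω ↦ R̂⁺(ω, λ) is measurable and P(R(λ) ≤ R̂⁺(·, λ)) ≥ 1 − δ. For each ω, suppose the set A(ω) = {λ ∈ Λ : R̂⁺(ω, λ′) < α for all λ′ ∈ Λ with λ′ ≥ λ} is nonempty, and define λ̂(ω) = inf A(ω); assume λ̂ is measurable. Then P(R(λ̂) ≤ α) ≥ 1 − δ. -/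
open MeasureTheory ProbabilityTheory

/-- **Validity of UCB calibration (abstract form).**
Let `R : [λ_min, λ_max] → [0,1]` be a continuous nonincreasing risk with `R(λ_max) = 0`,
and let `R̂⁺(ω, λ)` be a pointwise `(1-δ)` upper confidence bound for `R(λ)`.
If `λ̂(ω) = inf {λ : R̂⁺(ω, λ') < α for all λ' ≥ λ in [λ_min, λ_max]}` (with this set
assumed nonempty), then `P(R(λ̂) ≤ α) ≥ 1 - δ`. -/
theorem ucb_calibration_valid
    {Ω : Type*} [MeasurableSpace Ω] (P : Measure Ω) [IsProbabilityMeasure P]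
    (lmin lmax : ℝ) (hl : lmin < lmax)
    (α δ : ℝ) (hα : α ∈ Set.Ioo (0 : ℝ) 1) (hδ : δ ∈ Set.Ioo (0 : ℝ) 1)
    (R : ℝ → ℝ)
    (hR01 : ∀ l ∈ Set.Icc lmin lmax, R l ∈ Set.Icc (0 : ℝ) 1)
    (hRcont : ContinuousOn R (Set.Icc lmin lmax))
    (hRanti : ∀ l₁ ∈ Set.Icc lmin lmax, ∀ l₂ ∈ Set.Icc lmin lmax, l₁ ≤ l₂ → R l₂ ≤ R l₁)
    (hRmax : R lmax = 0)
    (Rp : Ω → ℝ → ℝ)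
    (hRpmeas : ∀ l ∈ Set.Icc lmin lmax, Measurable (fun ω => Rp ω l))
    (hUCB : ∀ l ∈ Set.Icc lmin lmax, (1 : ℝ) - δ ≤ (P {ω | R l ≤ Rp ω l}).toReal)
    (A : Ω → Set ℝ)
    (hA : ∀ ω, A ω = {l ∈ Set.Icc lmin lmax |
      ∀ l' ∈ Set.Icc lmin lmax, l ≤ l' → Rp ω l' < α})
    (hAne : ∀ ω, (A ω).Nonempty)
    (lhat : Ω → ℝ) (hlhat : ∀ ω, lhat ω = sInf (A ω))
    (hlhatmeas : Measurable lhat) :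
    (1 : ℝ) - δ ≤ (P {ω | R (lhat ω) ≤ α}).toReal := by
  -- basic facts about lhat ω: it lies in [lmin, lmax]
  have hAsub : ∀ ω, A ω ⊆ Set.Icc lmin lmax := by
    intro ω l hlm
    rw [hA ω] at hlm
    exact hlm.1
  have hAbdd : ∀ ω, BddBelow (A ω) := fun ω =>
    ⟨lmin, fun x hx => (hAsub ω hx).1⟩
  have hlhatmem : ∀ ω, lhat ω ∈ Set.Icc lmin lmax := by
    intro ω
    obtain ⟨l, hlA⟩ := hAne ω
    rw [hlhat ω]
    constructor
    · exact le_csInf (hAne ω) (fun x hx => (hAsub ω hx).1)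
    · exact le_trans (csInf_le (hAbdd ω) hlA) (hAsub ω hlA).2
  by_cases hcase : R lmin ≤ α
  · -- trivial case: risk is always at most α
    have : {ω | R (lhat ω) ≤ α} = Set.univ := by
      ext ω
      simp only [Set.mem_setOf_eq, Set.mem_univ, iff_true]
      exact le_trans (hRanti lmin (Set.left_mem_Icc.2 hl.le) (lhat ω) (hlhatmem ω)
        (hlhatmem ω).1) hcase
    rw [this, measure_univ]
    simp only [ENNReal.toReal_one]
    linarith [hδ.1]
  · push_neg at hcase
    -- find λ* with R λ* = α by the intermediate value theorem
    have hivt : α ∈ R '' Set.Icc lmin lmax := by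
      apply intermediate_value_Icc' hl.le hRcont
      rw [hRmax]
      exact ⟨hα.1.le, hcase.le⟩
    obtain ⟨lstar, hlstar, hRstar⟩ := hivt
    have hE : {ω | R lstar ≤ Rp ω lstar} ⊆ {ω | R (lhat ω) ≤ α} := by
      intro ω hω
      simp only [Set.mem_setOf_eq] at hω ⊢
      -- On this event, every element of A ω is ≥ λ*
      have hge : ∀ l ∈ A ω, lstar ≤ l := by
        intro l hlA
        by_contra hlt
        push_neg at hlt
        have := (hA ω ▸ hlA).2 lstar hlstar hlt.le
        rw [hRstar] at hω
        linarith
      have hstar_le : lstar ≤ lhat ω := by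
        rw [hlhat ω]
        exact le_csInf (hAne ω) hge
      calc R (lhat ω) ≤ R lstar :=
            hRanti lstar hlstar (lhat ω) (hlhatmem ω) hstar_le
        _ = α := hRstar
    calc (1 : ℝ) - δ ≤ (P {ω | R lstar ≤ Rp ω lstar}).toReal := hUCB lstar hlstar
      _ ≤ (P {ω | R (lhat ω) ≤ α}).toReal :=
          ENNReal.toReal_mono (measure_ne_top P _) (measure_mono hE)
end
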